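/- arXiv:1703.01707 — 4 statements merged into one kernel-verified Lean document; each statement's English description precedes it below -/
import Mathlib

section
/- Let X_1, ..., X_N be independent exponential random variables with rate 1, and let λ_1, ..., λ_N be pairwise distinct positive real numbers. Then E[ ln( Σ_{i=1}^N λ_i X_i ) ] = Σ_{i=1}^N ( ∏_{j≠i} λ_i/(λ_i − λ_j) ) · ( ln λ_i − γ ), where γ is the Euler–Mascheroni constant. -/
open MeasureTheory ProbabilityTheory Finset

section Stmt3Aux
open Real Set Filter
open scoped ENNReal NNReal
lemma integrableOn_log_mul_exp :
    IntegrableOn (fun x => Real.log x * Real.exp (-x)) (Set.Ioi (0:ℝ)) := by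
  have h01 : IntegrableOn (fun x => Real.log x * Real.exp (-x)) (Set.Ioc (0:ℝ) 1) := by
    have hg : IntegrableOn (fun x : ℝ => 2 * x ^ (-(1/2) : ℝ)) (Set.Ioc (0:ℝ) 1) :=
      ((intervalIntegral.intervalIntegrable_rpow' (by norm_num : (-1:ℝ) < -(1/2))).1).const_mul 2
    refine Integrable.mono' hg ?_ ?_
    · exact (Real.measurable_log.mul (Real.measurable_exp.comp measurable_neg)).aestronglyMeasurable
    · rw [ae_restrict_iff' measurableSet_Ioc]
      refine ae_of_all _ fun x hx => ?_
      have hx0 : 0 < x := hx.1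
      have hlog : Real.log x ≤ 0 := Real.log_nonpos hx0.le hx.2
      have h1 : -Real.log x ≤ 2 * x ^ (-(1/2) : ℝ) := by
        have hy : (0:ℝ) < x ^ (-(1/2) : ℝ) := Real.rpow_pos_of_pos hx0 _
        have h2 : Real.log (x ^ (-(1/2) : ℝ)) = -(1/2) * Real.log x := Real.log_rpow hx0 _
        have h3 : Real.log (x ^ (-(1/2) : ℝ)) ≤ x ^ (-(1/2) : ℝ) - 1 :=
          Real.log_le_sub_one_of_pos hy
        nlinarith
      have hexp : Real.exp (-x) ≤ 1 := Real.exp_le_one_iff.2 (by linarith)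
      have : ‖Real.log x * Real.exp (-x)‖ ≤ -Real.log x := by
        rw [norm_mul, Real.norm_eq_abs, Real.norm_eq_abs, abs_of_nonpos hlog,
          abs_of_pos (Real.exp_pos _)]
        calc -Real.log x * Real.exp (-x) ≤ -Real.log x * 1 := by
              apply mul_le_mul_of_nonneg_left hexp (by linarith)
          _ = -Real.log x := mul_one _
      linarith
  have h1i : IntegrableOn (fun x => Real.log x * Real.exp (-x)) (Set.Ioi (1:ℝ)) := by
    have hg : IntegrableOn (fun x : ℝ => Real.exp (-x) * x ^ ((2:ℝ) - 1)) (Set.Ioi (1:ℝ)) :=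
      (Real.GammaIntegral_convergent (by norm_num : (0:ℝ) < 2)).mono_set
        (Set.Ioi_subset_Ioi zero_le_one)
    refine Integrable.mono' hg ?_ ?_
    · exact (Real.measurable_log.mul (Real.measurable_exp.comp measurable_neg)).aestronglyMeasurable
    · rw [ae_restrict_iff' measurableSet_Ioi]
      refine ae_of_all _ fun x hx => ?_
      have hx1 : (1:ℝ) < x := hx
      have hlog : 0 ≤ Real.log x := Real.log_nonneg hx1.le
      have h2 : Real.log x ≤ x := (Real.log_le_sub_one_of_pos (by linarith)).trans (by linarith)
      have h3 : x ^ ((2:ℝ) - 1) = x := by norm_num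
      rw [norm_mul, Real.norm_eq_abs, Real.norm_eq_abs, abs_of_nonneg hlog,
        abs_of_pos (Real.exp_pos _), h3, mul_comm]
      exact mul_le_mul_of_nonneg_left h2 (Real.exp_pos _).le
  have : Set.Ioi (0:ℝ) = Set.Ioc 0 1 ∪ Set.Ioi 1 := (Set.Ioc_union_Ioi_eq_Ioi zero_le_one).symm
  rw [this]
  exact h01.union h1i

lemma integral_log_mul_exp :
    ∫ x in Set.Ioi (0:ℝ), Real.log x * Real.exp (-x) = -Real.eulerMascheroniConstant := by
  have h1 : HasDerivAt Complex.GammaIntegral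
      (∫ t : ℝ in Set.Ioi 0, (t:ℂ) ^ ((1:ℂ) - 1) * (Real.log t * Real.exp (-t))) 1 :=
    Complex.hasDerivAt_GammaIntegral (by norm_num)
  have heq : Complex.GammaIntegral =ᶠ[nhds (1:ℂ)] Complex.Gamma := by
    have hmem : {s : ℂ | 0 < s.re} ∈ nhds (1:ℂ) := by
      refine IsOpen.mem_nhds (isOpen_lt continuous_const Complex.continuous_re) ?_
      simp
    filter_upwards [hmem] with s hs
    exact (Complex.Gamma_eq_integral hs).symm
  have h2 : HasDerivAt Complex.GammaIntegral (-(Real.eulerMascheroniConstant:ℂ)) 1 :=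
    Complex.hasDerivAt_Gamma_one.congr_of_eventuallyEq heq
  have h3 := h1.unique h2
  have h4 : (∫ t : ℝ in Set.Ioi 0, (t:ℂ) ^ ((1:ℂ) - 1) * (Real.log t * Real.exp (-t)))
      = ((∫ t in Set.Ioi (0:ℝ), Real.log t * Real.exp (-t) : ℝ) : ℂ) := by
    have hcong : ∫ t : ℝ in Set.Ioi 0, (t:ℂ) ^ ((1:ℂ) - 1) * (Real.log t * Real.exp (-t))
        = ∫ t in Set.Ioi (0:ℝ), ((Real.log t * Real.exp (-t) : ℝ) : ℂ) := by
      refine setIntegral_congr_fun measurableSet_Ioi fun t ht => ?_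
      rw [sub_self, Complex.cpow_zero, one_mul]
      push_cast
      ring
    rw [hcong]
    exact integral_ofReal
  rw [h4] at h3
  exact_mod_cast h3

lemma expMeasure_repr :
    expMeasure 1 = volume.withDensity
      (fun x => ((Real.toNNReal (if 0 ≤ x then Real.exp (-x) else 0)) : ℝ≥0∞)) := by
  show gammaMeasure 1 1 = _
  unfold gammaMeasure
  congr 1
  funext x
  rw [gammaPDF, ENNReal.ofReal]
  congr 1
  unfold gammaPDFReal
  split_ifs with h
  · rw [Real.rpow_one, Real.Gamma_one, sub_self, Real.rpow_zero]
    norm_num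
  · rfl

lemma meas_expPdf : Measurable (fun x : ℝ => Real.toNNReal (if 0 ≤ x then Real.exp (-x) else 0)) := by
  apply Measurable.real_toNNReal
  exact Measurable.ite measurableSet_Ici (Real.measurable_exp.comp measurable_neg) measurable_const

lemma expPdf_smul (f : ℝ → ℝ) (x : ℝ) :
    (Real.toNNReal (if 0 ≤ x then Real.exp (-x) else 0)) • f x
      = Set.indicator (Set.Ici (0:ℝ)) (fun x => Real.exp (-x) * f x) x := by
  by_cases h : 0 ≤ x
  · rw [Set.indicator_of_mem (Set.mem_Ici.mpr h), if_pos h, NNReal.smul_def, Real.coe_toNNReal _ (Real.exp_pos _).le, smul_eq_mul]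
  · rw [Set.indicator_of_notMem (by simpa using h), if_neg h]
    simp

lemma integral_expMeasure_one (f : ℝ → ℝ) :
    ∫ x, f x ∂(expMeasure 1) = ∫ x in Set.Ioi (0:ℝ), Real.exp (-x) * f x := by
  rw [expMeasure_repr, integral_withDensity_eq_integral_smul meas_expPdf]
  calc ∫ x, (Real.toNNReal (if 0 ≤ x then Real.exp (-x) else 0)) • f x
      = ∫ x, Set.indicator (Set.Ici (0:ℝ)) (fun x => Real.exp (-x) * f x) x := by
        simp_rw [expPdf_smul]
    _ = ∫ x in Set.Ici (0:ℝ), Real.exp (-x) * f x := integral_indicator measurableSet_Ici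
    _ = ∫ x in Set.Ioi (0:ℝ), Real.exp (-x) * f x := integral_Ici_eq_integral_Ioi

lemma integrable_expMeasure_one_iff (f : ℝ → ℝ) :
    Integrable f (expMeasure 1) ↔
      IntegrableOn (fun x => Real.exp (-x) * f x) (Set.Ioi (0:ℝ)) := by
  rw [expMeasure_repr, integrable_withDensity_iff_integrable_smul meas_expPdf]
  have : (fun x => (Real.toNNReal (if 0 ≤ x then Real.exp (-x) else 0)) • f x)
      = Set.indicator (Set.Ici (0:ℝ)) (fun x => Real.exp (-x) * f x) := by
    funext x; exact expPdf_smul f x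
  rw [this, integrable_indicator_iff measurableSet_Ici]
  exact integrableOn_Ici_iff_integrableOn_Ioi

lemma integrableOn_exp_neg_mul {b : ℝ} (hb : 0 < b) :
    IntegrableOn (fun x => Real.exp (-(b * x))) (Set.Ioi (0:ℝ)) := by
  simpa [neg_mul] using exp_neg_integrableOn_Ioi 0 hb

lemma integral_exp_neg_mul {b : ℝ} (hb : 0 < b) :
    ∫ x in Set.Ioi (0:ℝ), Real.exp (-(b * x)) = b⁻¹ := by
  have h := integral_comp_mul_left_Ioi (fun x => Real.exp (-x)) 0 hb
  rw [mul_zero] at h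
  rw [h, integral_exp_neg_Ioi_zero, smul_eq_mul, mul_one]

-- ∫ x in Ioi 0, exp(-x) * x = 1
lemma integral_exp_neg_mul_self :
    ∫ x in Set.Ioi (0:ℝ), Real.exp (-x) * x = 1 := by
  have h := (Real.Gamma_eq_integral (by norm_num : (0:ℝ) < 2)).symm
  rw [Real.Gamma_two] at h
  rw [← h]
  refine setIntegral_congr_fun measurableSet_Ioi fun x hx => ?_
  norm_num

lemma integrableOn_exp_neg_mul_self :
    IntegrableOn (fun x => Real.exp (-x) * x) (Set.Ioi (0:ℝ)) := by
  have h := Real.GammaIntegral_convergent (by norm_num : (0:ℝ) < 2)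
  refine h.congr_fun (fun x hx => ?_) measurableSet_Ioi
  norm_num

lemma lagrange_sum_eval {N : ℕ} (hN : 1 ≤ N) (v : Fin N → ℝ) (hv : Function.Injective v) (x : ℝ) :
    ∑ i : Fin N, ∏ j ∈ univ.erase i, (x - v j) / (v i - v j) = 1 := by
  have : Nonempty (Fin N) := Fin.pos_iff_nonempty.mp hN
  have hs := Lagrange.sum_basis (Set.injOn_of_injective hv) (univ_nonempty (α := Fin N))
  have heq := congrArg (Polynomial.eval x) hs
  rw [Polynomial.eval_finset_sum, Polynomial.eval_one] at heq
  rw [← heq]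
  refine Finset.sum_congr rfl fun i _ => ?_
  rw [Lagrange.basis, Polynomial.eval_prod]
  refine Finset.prod_congr rfl fun j hj => ?_
  rw [Lagrange.basisDivisor, Polynomial.eval_mul, Polynomial.eval_C, Polynomial.eval_sub,
    Polynomial.eval_X, Polynomial.eval_C, div_eq_inv_mul]

lemma partial_fraction {N : ℕ} (hN : 1 ≤ N) (lam : Fin N → ℝ) (hpos : ∀ i, 0 < lam i)
    (hdist : Function.Injective lam) {t : ℝ} (ht : 0 ≤ t) :
    ∑ i, (∏ j ∈ univ.erase i, lam i / (lam i - lam j)) * (1 + lam i * t)⁻¹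
      = ∏ j, (1 + lam j * t)⁻¹ := by
  set v : Fin N → ℝ := fun i => -(lam i)⁻¹ with hv
  have hvinj : Function.Injective v := by
    intro i j hij
    apply hdist
    exact inv_injective (neg_injective hij)
  have hkey := lagrange_sum_eval hN v hvinj t
  have hden : ∀ k, (0:ℝ) < 1 + lam k * t := fun k => by nlinarith [hpos k]
  have hterm : ∀ i : Fin N, ∏ j ∈ univ.erase i, (t - v j) / (v i - v j)
      = (∏ j ∈ univ.erase i, lam i / (lam i - lam j))
        * ∏ j ∈ univ.erase i, (1 + lam j * t) := by
    intro i
    rw [← Finset.prod_mul_distrib]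
    refine Finset.prod_congr rfl fun j hj => ?_
    have hji : j ≠ i := (Finset.mem_erase.mp hj).1
    have hij : lam i ≠ lam j := fun h => hji ((hdist h).symm)
    have h1 : lam i - lam j ≠ 0 := sub_ne_zero.mpr hij
    have h2 : lam i ≠ 0 := (hpos i).ne'
    have h3 : lam j ≠ 0 := (hpos j).ne'
    have h5 : v i - v j ≠ 0 := sub_ne_zero.mpr (fun h => hji.symm (hvinj h))
    rw [div_eq_iff h5, hv]
    simp only []
    field_simp
    ring
  have hkey2 : ∑ i, (∏ j ∈ univ.erase i, lam i / (lam i - lam j))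
      * ∏ j ∈ univ.erase i, (1 + lam j * t) = 1 := by
    calc ∑ i, (∏ j ∈ univ.erase i, lam i / (lam i - lam j))
        * ∏ j ∈ univ.erase i, (1 + lam j * t)
        = ∑ i, ∏ j ∈ univ.erase i, (t - v j) / (v i - v j) :=
          Finset.sum_congr rfl fun i _ => (hterm i).symm
      _ = 1 := hkey
  have hP : (0:ℝ) < ∏ j, (1 + lam j * t) := Finset.prod_pos fun j _ => hden j
  have hstep : ∀ i : Fin N,
      (∏ j ∈ univ.erase i, lam i / (lam i - lam j)) * (1 + lam i * t)⁻¹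
      = ((∏ j ∈ univ.erase i, lam i / (lam i - lam j))
          * ∏ j ∈ univ.erase i, (1 + lam j * t)) * (∏ j, (1 + lam j * t))⁻¹ := by
    intro i
    have hmul : (1 + lam i * t) * ∏ j ∈ univ.erase i, (1 + lam j * t)
        = ∏ j, (1 + lam j * t) := Finset.mul_prod_erase univ (fun j => 1 + lam j * t) (mem_univ i)
    rw [← hmul, mul_inv]
    have hE : (∏ j ∈ univ.erase i, (1 + lam j * t)) ≠ 0 :=
      (Finset.prod_pos fun j _ => hden j).ne'
    rw [mul_mul_mul_comm, mul_inv_cancel₀ hE, mul_one]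
  calc ∑ i, (∏ j ∈ univ.erase i, lam i / (lam i - lam j)) * (1 + lam i * t)⁻¹
      = ∑ i, ((∏ j ∈ univ.erase i, lam i / (lam i - lam j))
          * ∏ j ∈ univ.erase i, (1 + lam j * t)) * (∏ j, (1 + lam j * t))⁻¹ :=
        Finset.sum_congr rfl fun i _ => hstep i
    _ = (∑ i, (∏ j ∈ univ.erase i, lam i / (lam i - lam j))
          * ∏ j ∈ univ.erase i, (1 + lam j * t)) * (∏ j, (1 + lam j * t))⁻¹ :=
        (Finset.sum_mul _ _ _).symm
    _ = (∏ j, (1 + lam j * t))⁻¹ := by rw [hkey2, one_mul]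
    _ = ∏ j, (1 + lam j * t)⁻¹ := by rw [Finset.prod_inv_distrib]

lemma partial_fraction_sum_one {N : ℕ} (hN : 1 ≤ N) (lam : Fin N → ℝ) (hpos : ∀ i, 0 < lam i)
    (hdist : Function.Injective lam) :
    ∑ i, (∏ j ∈ univ.erase i, lam i / (lam i - lam j)) = 1 := by
  have h := partial_fraction hN lam hpos hdist (t := 0) le_rfl
  simpa using h

lemma frullani_aux {a b : ℝ} (ha : 0 < a) (hab : a ≤ b) :
    IntegrableOn (fun t => (Real.exp (-(a*t)) - Real.exp (-(b*t)))/t) (Set.Ioi (0:ℝ)) ∧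
    ∫ t in Set.Ioi (0:ℝ), (Real.exp (-(a*t)) - Real.exp (-(b*t)))/t = Real.log (b/a) := by
  have hb : 0 < b := lt_of_lt_of_le ha hab
  have hKcont : Continuous (fun p : ℝ × ℝ => Real.exp (-(p.2 * p.1))) := by fun_prop
  set μ := volume.restrict (Set.Ioi (0:ℝ)) with hμ
  set ν := volume.restrict (Set.Ioc a b) with hν
  have hasm : AEStronglyMeasurable (fun p : ℝ × ℝ => Real.exp (-(p.2 * p.1))) (μ.prod ν) :=
    hKcont.aestronglyMeasurable
  -- inner integral over u
  have key1 : ∀ t : ℝ, 0 < t →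
      ∫ u in Set.Ioc a b, Real.exp (-(u * t)) = (Real.exp (-(a*t)) - Real.exp (-(b*t)))/t := by
    intro t ht
    rw [← intervalIntegral.integral_of_le hab]
    have hD : ∀ u : ℝ, HasDerivAt (fun u => -Real.exp (-(u*t))/t) (Real.exp (-(u*t))) u := by
      intro u
      have h1 : HasDerivAt (fun u : ℝ => -(u*t)) (-t) u := by
        simpa using ((hasDerivAt_id u).mul_const t).fun_neg
      have h2 := (Real.hasDerivAt_exp (-(u*t))).comp u h1
      have h3 := h2.fun_neg.div_const t
      refine h3.congr_deriv ?_
      rw [mul_neg, neg_neg, mul_div_assoc, div_self ht.ne', mul_one]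
    rw [intervalIntegral.integral_eq_sub_of_hasDerivAt (fun u _ => hD u)
      (Continuous.intervalIntegrable (by fun_prop) _ _)]
    field_simp
    ring
  -- inner integral over t
  have key2 : ∀ u : ℝ, u ∈ Set.Ioc a b → ∫ t in Set.Ioi (0:ℝ), Real.exp (-(u * t)) = u⁻¹ :=
    fun u hu => integral_exp_neg_mul (ha.trans hu.1)
  -- integrability on the product
  have hKint : Integrable (fun p : ℝ × ℝ => Real.exp (-(p.2 * p.1))) (μ.prod ν) := by
    rw [integrable_prod_iff hasm]
    constructor
    · refine ae_of_all _ fun t => ?_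
      exact (Continuous.integrableOn_Ioc (by fun_prop))
    · have hbound : Integrable (fun t : ℝ => (b - a) * Real.exp (-(a * t))) μ :=
        (integrableOn_exp_neg_mul ha).const_mul _
      refine Integrable.mono' hbound (hasm.norm.integral_prod_right') ?_
      filter_upwards [ae_restrict_mem measurableSet_Ioi] with t ht
      have h1 : ∀ u : ℝ, ‖Real.exp (-(u * t))‖ = Real.exp (-(u * t)) := fun u =>
        Real.norm_eq_abs _ ▸ abs_of_pos (Real.exp_pos _)
      have h2 : ∫ u in Set.Ioc a b, ‖Real.exp (-(u * t))‖
          = ∫ u in Set.Ioc a b, Real.exp (-(u * t)) := by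
        simp_rw [h1]
      rw [Real.norm_eq_abs]
      have h3 : ∫ u in Set.Ioc a b, Real.exp (-(u * t)) ≤ ∫ u in Set.Ioc a b, Real.exp (-(a * t)) := by
        refine setIntegral_mono_on (Continuous.integrableOn_Ioc (by fun_prop))
          (integrableOn_const measure_Ioc_lt_top.ne) measurableSet_Ioc ?_
        intro u hu
        apply Real.exp_le_exp.2
        have := hu.1
        nlinarith [(mem_Ioi.mp ht).le, (mem_Ioi.mp ht)]
      have h4 : ∫ u in Set.Ioc a b, (Real.exp (-(a * t)) : ℝ) = (b - a) * Real.exp (-(a * t)) := by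
        rw [setIntegral_const, measureReal_def, Real.volume_Ioc, smul_eq_mul, ENNReal.toReal_ofReal (by linarith)]
      have h5 : 0 ≤ ∫ u in Set.Ioc a b, ‖Real.exp (-(u * t))‖ :=
        integral_nonneg fun u => norm_nonneg _
      rw [abs_of_nonneg h5, h2]
      linarith [h3, h4.le, h4.ge]
  -- conclusion
  have hswap := integral_integral_swap (f := fun t u => Real.exp (-(u * t))) hKint
  have hlhs : ∫ t, (∫ u, Real.exp (-(u * t)) ∂ν) ∂μ
      = ∫ t in Set.Ioi (0:ℝ), (Real.exp (-(a*t)) - Real.exp (-(b*t)))/t := by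
    rw [hμ, hν]
    refine integral_congr_ae ?_
    filter_upwards [ae_restrict_mem measurableSet_Ioi] with t ht
    exact key1 t ht
  have hrhs : ∫ u, (∫ t, Real.exp (-(u * t)) ∂μ) ∂ν = Real.log (b/a) := by
    rw [hν, hμ]
    have : ∫ u in Set.Ioc a b, (∫ t in Set.Ioi (0:ℝ), Real.exp (-(u * t)))
        = ∫ u in Set.Ioc a b, u⁻¹ := by
      refine setIntegral_congr_fun measurableSet_Ioc fun u hu => key2 u hu
    rw [this, ← intervalIntegral.integral_of_le hab, integral_inv_of_pos ha hb]
  constructor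
  · have h6 : Integrable (fun t => ∫ u, Real.exp (-(u * t)) ∂ν) μ := hKint.integral_prod_left
    refine h6.congr ?_
    filter_upwards [ae_restrict_mem measurableSet_Ioi] with t ht
    exact key1 t ht
  · rw [← hlhs, hswap, hrhs]

lemma frullani {s : ℝ} (hs : 0 < s) :
    IntegrableOn (fun t => (Real.exp (-t) - Real.exp (-(s*t)))/t) (Set.Ioi (0:ℝ)) ∧
    ∫ t in Set.Ioi (0:ℝ), (Real.exp (-t) - Real.exp (-(s*t)))/t = Real.log s := by
  rcases le_total 1 s with h | h
  · have h2 := frullani_aux one_pos h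
    have hfun : (fun t : ℝ => (Real.exp (-(1*t)) - Real.exp (-(s*t)))/t)
        = fun t => (Real.exp (-t) - Real.exp (-(s*t)))/t := by
      funext t; rw [one_mul]
    rw [hfun] at h2
    rcases h2 with ⟨h2a, h2b⟩
    rw [div_one] at h2b
    exact ⟨h2a, h2b⟩
  · have h2 := frullani_aux hs h
    have hfun : (fun t : ℝ => (Real.exp (-t) - Real.exp (-(s*t)))/t)
        = fun t => -((Real.exp (-(s*t)) - Real.exp (-(1*t)))/t) := by
      funext t; rw [one_mul]; ring
    constructor
    · rw [hfun]; exact h2.1.neg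
    · rw [hfun, integral_neg, h2.2, one_div, Real.log_inv]; ring

lemma frullani_abs {s : ℝ} (hs : 0 < s) :
    ∫ t in Set.Ioi (0:ℝ), |(Real.exp (-t) - Real.exp (-(s*t)))/t| = |Real.log s| := by
  rcases le_total 1 s with h | h
  · have hcong : ∫ t in Set.Ioi (0:ℝ), |(Real.exp (-t) - Real.exp (-(s*t)))/t|
        = ∫ t in Set.Ioi (0:ℝ), (Real.exp (-t) - Real.exp (-(s*t)))/t := by
      refine setIntegral_congr_fun measurableSet_Ioi fun t ht => ?_
      have ht0 : (0:ℝ) < t := ht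
      refine abs_of_nonneg (div_nonneg (sub_nonneg.2 (Real.exp_le_exp.2 (by nlinarith))) ht0.le)
    rw [hcong, (frullani hs).2, abs_of_nonneg (Real.log_nonneg h)]
  · have hcong : ∫ t in Set.Ioi (0:ℝ), |(Real.exp (-t) - Real.exp (-(s*t)))/t|
        = ∫ t in Set.Ioi (0:ℝ), -((Real.exp (-t) - Real.exp (-(s*t)))/t) := by
      refine setIntegral_congr_fun measurableSet_Ioi fun t ht => ?_
      have ht0 : (0:ℝ) < t := ht
      refine abs_of_nonpos (div_nonpos_of_nonpos_of_nonneg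
        (sub_nonpos.2 (Real.exp_le_exp.2 (by nlinarith))) ht0.le)
    rw [hcong, integral_neg, (frullani hs).2, abs_of_nonpos (Real.log_nonpos hs.le h)]

lemma frullani_rv {Ω : Type*} [MeasurableSpace Ω] (P : Measure Ω) [IsProbabilityMeasure P]
    (S : Ω → ℝ) (hSm : Measurable S) (hSpos : ∀ᵐ ω ∂P, 0 < S ω)
    (hlog : Integrable (fun ω => Real.log (S ω)) P) :
    IntegrableOn (fun t => (Real.exp (-t) - ∫ ω, Real.exp (-(t * S ω)) ∂P)/t) (Set.Ioi (0:ℝ)) ∧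
    ∫ ω, Real.log (S ω) ∂P
      = ∫ t in Set.Ioi (0:ℝ), (Real.exp (-t) - ∫ ω, Real.exp (-(t * S ω)) ∂P)/t := by
  set ν := volume.restrict (Set.Ioi (0:ℝ)) with hν
  set G : Ω × ℝ → ℝ := fun p => (Real.exp (-p.2) - Real.exp (-(S p.1 * p.2)))/p.2 with hG
  have hGmeas : Measurable G := by
    refine Measurable.div ?_ measurable_snd
    refine Measurable.sub ?_ ?_
    · exact Real.measurable_exp.comp measurable_snd.neg
    · exact Real.measurable_exp.comp (((hSm.comp measurable_fst).mul measurable_snd).neg)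
  have hGm : AEStronglyMeasurable G (P.prod ν) := hGmeas.aestronglyMeasurable
  have hsec : ∀ᵐ ω ∂P, Integrable (fun t => G (ω, t)) ν := by
    filter_upwards [hSpos] with ω hω
    exact (frullani hω).1
  have habs : ∀ᵐ ω ∂P, ∫ t, ‖G (ω, t)‖ ∂ν = |Real.log (S ω)| := by
    filter_upwards [hSpos] with ω hω
    simpa [Real.norm_eq_abs] using frullani_abs hω
  have hGint : Integrable G (P.prod ν) := by
    rw [integrable_prod_iff hGm]
    refine ⟨hsec, ?_⟩
    refine Integrable.congr hlog.abs ?_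
    filter_upwards [habs] with ω hω
    exact hω.symm
  have hswap := integral_integral_swap (f := fun ω t => G (ω, t)) hGint
  have hlhs : ∫ ω, (∫ t, G (ω, t) ∂ν) ∂P = ∫ ω, Real.log (S ω) ∂P := by
    refine integral_congr_ae ?_
    filter_upwards [hSpos] with ω hω
    exact (frullani hω).2
  have hptt : ∀ t : ℝ, 0 < t →
      ∫ ω, G (ω, t) ∂P = (Real.exp (-t) - ∫ ω, Real.exp (-(t * S ω)) ∂P)/t := by
    intro t ht
    have hbdd : Integrable (fun ω => Real.exp (-(S ω * t))) P := by
      refine Integrable.mono' (integrable_const 1)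
        ((Real.measurable_exp.comp ((hSm.mul measurable_const).neg)).aestronglyMeasurable) ?_
      filter_upwards [hSpos] with ω hω
      rw [Real.norm_eq_abs, abs_of_pos (Real.exp_pos _)]
      exact Real.exp_le_one_iff.2 (by nlinarith)
    have : ∫ ω, G (ω, t) ∂P
        = (∫ ω, (Real.exp (-t) - Real.exp (-(S ω * t))) ∂P)/t := integral_div t _
    rw [this, integral_sub (integrable_const _) hbdd, integral_const]
    have hcomm : ∫ ω, Real.exp (-(S ω * t)) ∂P = ∫ ω, Real.exp (-(t * S ω)) ∂P := by
      refine integral_congr_ae (ae_of_all _ fun ω => ?_)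
      simp only []
      rw [mul_comm]
    rw [hcomm]
    simp
  have hint2 : Integrable (fun t => ∫ ω, G (ω, t) ∂P) ν := hGint.integral_prod_right
  constructor
  · refine hint2.congr ?_
    rw [hν]
    filter_upwards [ae_restrict_mem measurableSet_Ioi] with t ht
    exact hptt t ht
  · rw [← hlhs, hswap]
    rw [hν]
    refine integral_congr_ae ?_
    filter_upwards [ae_restrict_mem measurableSet_Ioi] with t ht
    exact hptt t ht

section ExpRV
set_option linter.unusedSectionVars false
variable {Ω : Type*} [MeasurableSpace Ω] {P : Measure Ω} [IsProbabilityMeasure P]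
  {X : Ω → ℝ} (hXm : Measurable X) (hX : Measure.map X P = expMeasure 1)

lemma integrableOn_exp_neg' : IntegrableOn (fun x => Real.exp (-x)) (Set.Ioi (0:ℝ)) := by
  have := integrableOn_exp_neg_mul (b := 1) one_pos
  simpa using this

include hXm hX

lemma exp_rv_pos : ∀ᵐ ω ∂P, 0 < X ω := by
  have key : P (X ⁻¹' (Set.Iic 0)) = 0 := by
    rw [← Measure.map_apply hXm measurableSet_Iic, hX, expMeasure_repr,
      withDensity_apply _ measurableSet_Iic]
    rw [setLIntegral_congr (Iio_ae_eq_Iic (a := (0:ℝ))).symm]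
    have hz : ∀ᵐ x ∂(volume.restrict (Set.Iio (0:ℝ))),
        ((Real.toNNReal (if 0 ≤ x then Real.exp (-x) else 0)) : ℝ≥0∞) = 0 := by
      filter_upwards [ae_restrict_mem measurableSet_Iio] with x hx
      have : ¬ (0:ℝ) ≤ x := not_le.mpr hx
      simp [this]
    rw [lintegral_congr_ae hz, lintegral_zero]
  rw [ae_iff]
  convert key using 2
  ext ω
  simp [not_lt]

lemma exp_rv_integrable : Integrable X P := by
  have h1 : Integrable (fun x : ℝ => x) (expMeasure 1) :=
    (integrable_expMeasure_one_iff _).2 integrableOn_exp_neg_mul_self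
  rw [← hX] at h1
  exact (integrable_map_measure measurable_id.aestronglyMeasurable hXm.aemeasurable).1 h1

lemma exp_rv_log_integrable {lam : ℝ} (hl : 0 < lam) :
    Integrable (fun ω => Real.log (lam * X ω)) P := by
  have hfm : Measurable (fun x : ℝ => Real.log (lam * x)) :=
    Real.measurable_log.comp (measurable_id.const_mul lam)
  have h1 : Integrable (fun x : ℝ => Real.log (lam * x)) (expMeasure 1) := by
    rw [integrable_expMeasure_one_iff]
    have h2 : IntegrableOn
        (fun x => Real.log lam * Real.exp (-x) + Real.log x * Real.exp (-x))
        (Set.Ioi (0:ℝ)) :=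
      (integrableOn_exp_neg'.const_mul _).add integrableOn_log_mul_exp
    refine h2.congr_fun_ae ?_
    filter_upwards [ae_restrict_mem measurableSet_Ioi] with x hx
    rw [Real.log_mul hl.ne' (ne_of_gt hx)]
    ring
  rw [← hX] at h1
  exact (integrable_map_measure hfm.aestronglyMeasurable hXm.aemeasurable).1 h1

lemma exp_rv_log_integral {lam : ℝ} (hl : 0 < lam) :
    ∫ ω, Real.log (lam * X ω) ∂P = Real.log lam - Real.eulerMascheroniConstant := by
  have hfm : Measurable (fun x : ℝ => Real.log (lam * x)) :=
    Real.measurable_log.comp (measurable_id.const_mul lam)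
  have h0 : ∫ ω, Real.log (lam * X ω) ∂P = ∫ x, Real.log (lam * x) ∂(expMeasure 1) := by
    rw [← hX, integral_map hXm.aemeasurable hfm.aestronglyMeasurable]
  rw [h0, integral_expMeasure_one]
  have hcong : ∫ x in Set.Ioi (0:ℝ), Real.exp (-x) * Real.log (lam * x)
      = ∫ x in Set.Ioi (0:ℝ),
          (Real.log lam * Real.exp (-x) + Real.log x * Real.exp (-x)) := by
    refine setIntegral_congr_fun measurableSet_Ioi fun x (hx : 0 < x) => ?_
    rw [Real.log_mul hl.ne' hx.ne']
    ring
  rw [hcong, integral_add (integrableOn_exp_neg'.const_mul _) integrableOn_log_mul_exp,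
    integral_const_mul, integral_exp_neg_Ioi_zero, integral_log_mul_exp]
  ring

lemma exp_rv_laplace {lam t : ℝ} (hl : 0 < lam) (ht : 0 < t) :
    ∫ ω, Real.exp (-(t * (lam * X ω))) ∂P = (1 + lam * t)⁻¹ := by
  have hfm : Measurable (fun x : ℝ => Real.exp (-(t * (lam * x)))) := by
    apply Real.measurable_exp.comp
    exact (measurable_id.const_mul lam).const_mul t |>.neg
  have h0 : ∫ ω, Real.exp (-(t * (lam * X ω))) ∂P
      = ∫ x, Real.exp (-(t * (lam * x))) ∂(expMeasure 1) := by
    rw [← hX, integral_map hXm.aemeasurable hfm.aestronglyMeasurable]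
  rw [h0, integral_expMeasure_one]
  have hpos : (0:ℝ) < 1 + lam * t := by positivity
  have hcong : ∫ x in Set.Ioi (0:ℝ), Real.exp (-x) * Real.exp (-(t * (lam * x)))
      = ∫ x in Set.Ioi (0:ℝ), Real.exp (-((1 + lam * t) * x)) := by
    refine setIntegral_congr_fun measurableSet_Ioi fun x _ => ?_
    rw [← Real.exp_add]
    ring_nf
  rw [hcong, integral_exp_neg_mul hpos]
end ExpRV

end Stmt3Aux

section Stmt3Main
open Real Set Filter

/-- Let `X_1, …, X_N` be independent rate-1 exponential random variables and
`λ_1, …, λ_N` pairwise distinct positive reals.  Then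
`E[ln(Σ λ_i X_i)] = Σ_i (∏_{j≠i} λ_i/(λ_i − λ_j)) (ln λ_i − γ)`,
with `γ` the Euler–Mascheroni constant. -/
theorem stmt_3 {Ω : Type*} [MeasurableSpace Ω] (P : Measure Ω) [IsProbabilityMeasure P]
    (N : ℕ) (hN : 1 ≤ N) (X : Fin N → Ω → ℝ) (hXm : ∀ i, Measurable (X i))
    (hindep : iIndepFun X P)
    (hX : ∀ i, Measure.map (X i) P = expMeasure 1)
    (lam : Fin N → ℝ) (hpos : ∀ i, 0 < lam i) (hdist : Function.Injective lam) :
    ∫ ω, Real.log (∑ i, lam i * X i ω) ∂P =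
      ∑ i, (∏ j ∈ univ.erase i, lam i / (lam i - lam j)) *
        (Real.log (lam i) - Real.eulerMascheroniConstant) := by
  classical
  set c : Fin N → ℝ := fun i => ∏ j ∈ univ.erase i, lam i / (lam i - lam j) with hc
  set S : Ω → ℝ := fun ω => ∑ i, lam i * X i ω with hS
  have hSm : Measurable S := Finset.measurable_sum _ fun i _ => (hXm i).const_mul (lam i)
  have hXpos : ∀ i, ∀ᵐ ω ∂P, 0 < X i ω := fun i => exp_rv_pos (hXm i) (hX i)
  have hallpos : ∀ᵐ ω ∂P, ∀ i, 0 < X i ω := ae_all_iff.2 hXpos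
  have i0 : Fin N := ⟨0, hN⟩
  have hSpos : ∀ᵐ ω ∂P, 0 < S ω := by
    filter_upwards [hallpos] with ω hω
    exact Finset.sum_pos (fun i _ => mul_pos (hpos i) (hω i)) ⟨i0, mem_univ _⟩
  have hSint : Integrable S P :=
    integrable_finset_sum _ fun i _ => (exp_rv_integrable (hXm i) (hX i)).const_mul (lam i)
  have hlog0 : Integrable (fun ω => Real.log (lam i0 * X i0 ω)) P :=
    exp_rv_log_integrable (hXm i0) (hX i0) (hpos i0)
  have hlogS : Integrable (fun ω => Real.log (S ω)) P := by
    refine Integrable.mono' (hSint.abs.add hlog0.abs)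
      ((Real.measurable_log.comp hSm).aestronglyMeasurable) ?_
    filter_upwards [hallpos] with ω hω
    have h1 : 0 < lam i0 * X i0 ω := mul_pos (hpos i0) (hω i0)
    have h2 : lam i0 * X i0 ω ≤ S ω :=
      Finset.single_le_sum (f := fun i => lam i * X i ω)
        (fun i _ => (mul_pos (hpos i) (hω i)).le) (mem_univ i0)
    have h3 : 0 < S ω := lt_of_lt_of_le h1 h2
    rw [Real.norm_eq_abs, abs_le]
    constructor
    · have h4 := Real.log_le_log h1 h2
      have h5 : -|Real.log (lam i0 * X i0 ω)| ≤ Real.log (lam i0 * X i0 ω) := neg_abs_le _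
      have h6 : 0 ≤ |S ω| := abs_nonneg _
      simp only [Pi.add_apply]
      linarith
    · have h7 := Real.log_le_sub_one_of_pos h3
      have h8 := le_abs_self (S ω)
      have h9 : 0 ≤ |Real.log (lam i0 * X i0 ω)| := abs_nonneg _
      simp only [Pi.add_apply]
      linarith
  set Y : Fin N → Ω → ℝ := fun i ω => lam i * X i ω with hY
  have hYm : ∀ i, Measurable (Y i) := fun i => (hXm i).const_mul (lam i)
  have hYindep : iIndepFun Y P :=
    hindep.comp (fun i (x : ℝ) => lam i * x) (fun i => measurable_id.const_mul (lam i))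
  have hSfun : S = ∑ i, Y i := by
    funext ω
    rw [hS, Finset.sum_apply]
  have hPhi : ∀ t : ℝ, 0 < t →
      ∫ ω, Real.exp (-(t * S ω)) ∂P = ∏ i, (1 + lam i * t)⁻¹ := by
    intro t ht
    have h1 : ∫ ω, Real.exp (-(t * S ω)) ∂P = mgf S P (-t) := by
      rw [mgf]
      refine integral_congr_ae (ae_of_all _ fun ω => ?_)
      simp only [neg_mul]
    rw [h1, hSfun, iIndepFun.mgf_sum hYindep hYm univ]
    refine Finset.prod_congr rfl fun i _ => ?_
    rw [mgf, ← exp_rv_laplace (hXm i) (hX i) (hpos i) ht]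
    refine integral_congr_ae (ae_of_all _ fun ω => ?_)
    simp only [neg_mul]
    rfl
  obtain ⟨hIntS, hEqS⟩ := frullani_rv P S hSm hSpos hlogS
  have hYfr : ∀ i : Fin N,
      IntegrableOn
        (fun t => (Real.exp (-t) - ∫ ω, Real.exp (-(t * (lam i * X i ω))) ∂P)/t)
        (Set.Ioi (0:ℝ)) ∧
      ∫ ω, Real.log (lam i * X i ω) ∂P
        = ∫ t in Set.Ioi (0:ℝ),
            (Real.exp (-t) - ∫ ω, Real.exp (-(t * (lam i * X i ω))) ∂P)/t := by
    intro i
    refine frullani_rv P (Y i) (hYm i) ?_ ?_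
    · filter_upwards [hXpos i] with ω hω
      exact mul_pos (hpos i) hω
    · exact exp_rv_log_integrable (hXm i) (hX i) (hpos i)
  have hmid : ∫ t in Set.Ioi (0:ℝ), (Real.exp (-t) - ∫ ω, Real.exp (-(t * S ω)) ∂P)/t
      = ∫ t in Set.Ioi (0:ℝ), ∑ i, c i *
          ((Real.exp (-t) - ∫ ω, Real.exp (-(t * (lam i * X i ω))) ∂P)/t) := by
    refine setIntegral_congr_fun measurableSet_Ioi fun t ht => ?_
    have ht0 : (0:ℝ) < t := ht
    rw [hPhi t ht0]
    have hstep : ∀ i ∈ (univ : Finset (Fin N)),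
        c i * ((Real.exp (-t) - ∫ ω, Real.exp (-(t * (lam i * X i ω))) ∂P)/t)
        = c i * ((Real.exp (-t) - (1 + lam i * t)⁻¹)/t) := fun i _ => by
      rw [exp_rv_laplace (hXm i) (hX i) (hpos i) ht0]
    rw [Finset.sum_congr rfl hstep]
    have e1 : ∑ i, c i * ((Real.exp (-t) - (1 + lam i * t)⁻¹)/t)
        = (∑ i, c i * (Real.exp (-t) - (1 + lam i * t)⁻¹))/t := by
      rw [Finset.sum_div]
      exact Finset.sum_congr rfl fun i _ => (mul_div_assoc _ _ _).symm
    have e2 : ∑ i, c i * (Real.exp (-t) - (1 + lam i * t)⁻¹)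
        = (∑ i, c i) * Real.exp (-t) - ∑ i, c i * (1 + lam i * t)⁻¹ := by
      rw [Finset.sum_mul, ← Finset.sum_sub_distrib]
      exact Finset.sum_congr rfl fun i _ => by ring
    rw [e1, e2, partial_fraction_sum_one hN lam hpos hdist,
      partial_fraction hN lam hpos hdist ht0.le, one_mul]
  have hlast : ∫ t in Set.Ioi (0:ℝ), ∑ i, c i *
        ((Real.exp (-t) - ∫ ω, Real.exp (-(t * (lam i * X i ω))) ∂P)/t)
      = ∑ i, c i * (Real.log (lam i) - Real.eulerMascheroniConstant) := by
    rw [integral_finset_sum _ (fun i _ => ((hYfr i).1.const_mul (c i)))]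
    refine Finset.sum_congr rfl fun i _ => ?_
    rw [integral_const_mul, ← (hYfr i).2, exp_rv_log_integral (hXm i) (hX i) (hpos i)]
  calc ∫ ω, Real.log (S ω) ∂P
      = ∫ t in Set.Ioi (0:ℝ), (Real.exp (-t) - ∫ ω, Real.exp (-(t * S ω)) ∂P)/t := hEqS
    _ = ∑ i, c i * (Real.log (lam i) - Real.eulerMascheroniConstant) := by
        rw [hmid, hlast]

end Stmt3Main
end

section
/- Let m > 0, n > 0 and fix y > 0. The function x ↦ log₂( m n x² y / (m x + n x y + 1) ) is concave on (0, ∞); its second derivative equals − [ 2 + 4(n y + m) x + (m² + n² y² + 2 m n y) x² ] / [ x² (1 + m x + n y x)² · ln 2 ], which is negative. -/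
open Real Set

private lemma aux_affine_pos {a x : ℝ} (ha : 0 < a) (hx : 0 < x) : 0 < 1 + a * x := by
  positivity

private lemma aux_hd1 (c a : ℝ) (ha : 0 < a) {x : ℝ} (hx : 0 < x) :
    HasDerivAt (fun x : ℝ => (c + (2 * Real.log x - Real.log (1 + a * x))) / Real.log 2)
      ((2 / x - a / (1 + a * x)) / Real.log 2) x := by
  have h1 : HasDerivAt (fun x : ℝ => Real.log x) x⁻¹ x := Real.hasDerivAt_log hx.ne'
  have haff : HasDerivAt (fun x : ℝ => 1 + a * x) a x := by
    simpa using ((hasDerivAt_id x).const_mul a).const_add 1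
  have h2 : HasDerivAt (fun x : ℝ => Real.log (1 + a * x)) ((1 + a * x)⁻¹ * a) x :=
    by have := (Real.hasDerivAt_log (aux_affine_pos ha hx).ne').comp x haff; exact this
  have h3 : HasDerivAt (fun x : ℝ => c + (2 * Real.log x - Real.log (1 + a * x)))
      (2 * x⁻¹ - (1 + a * x)⁻¹ * a) x := ((h1.const_mul 2).sub h2).const_add c
  have := h3.div_const (Real.log 2)
  exact this.congr_deriv (by ring)

private lemma aux_hd2 (a : ℝ) (ha : 0 < a) {x : ℝ} (hx : 0 < x) :
    HasDerivAt (fun x : ℝ => (2 / x - a / (1 + a * x)) / Real.log 2)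
      ((-2 / x ^ 2 + a ^ 2 / (1 + a * x) ^ 2) / Real.log 2) x := by
  have h1 : HasDerivAt (fun x : ℝ => x⁻¹) (-(x ^ 2)⁻¹) x := hasDerivAt_inv hx.ne'
  have haff : HasDerivAt (fun x : ℝ => 1 + a * x) a x := by
    simpa using ((hasDerivAt_id x).const_mul a).const_add 1
  have h2 : HasDerivAt (fun x : ℝ => (1 + a * x)⁻¹) (-((1 + a * x) ^ 2)⁻¹ * a) x :=
    (hasDerivAt_inv (aux_affine_pos ha hx).ne').comp x haff
  have h3 : HasDerivAt (fun x : ℝ => 2 / x - a / (1 + a * x))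
      (2 * -(x ^ 2)⁻¹ - a * (-((1 + a * x) ^ 2)⁻¹ * a)) x := by
    have e1 : (fun x : ℝ => 2 / x - a / (1 + a * x))
        = fun x : ℝ => 2 * x⁻¹ - a * (1 + a * x)⁻¹ := by
      funext t; rw [div_eq_mul_inv, div_eq_mul_inv]
    rw [e1]
    exact (h1.const_mul 2).sub (h2.const_mul a)
  have := h3.div_const (Real.log 2)
  have hxne : x ≠ 0 := hx.ne'
  have hane : (1 + a * x) ≠ 0 := (aux_affine_pos ha hx).ne'
  exact this.congr_deriv (by ring)

/-- For `m, n > 0` and fixed `y > 0`, the function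
`x ↦ log₂(m n x² y / (m x + n x y + 1))` is concave on `(0,∞)`, and its second
derivative equals `−[2 + 4(ny+m)x + (m² + n²y² + 2mny)x²] / [x² (1+mx+nyx)² ln 2]`,
which is negative. -/
theorem stmt_10 (m n y : ℝ) (hm : 0 < m) (hn : 0 < n) (hy : 0 < y) :
    ConcaveOn ℝ (Set.Ioi 0)
      (fun x : ℝ => Real.logb 2 (m * n * x ^ 2 * y / (m * x + n * x * y + 1))) ∧
    ∀ x : ℝ, 0 < x →
      deriv (deriv (fun x : ℝ =>
          Real.logb 2 (m * n * x ^ 2 * y / (m * x + n * x * y + 1)))) x =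
        -(2 + 4 * (n * y + m) * x + (m ^ 2 + n ^ 2 * y ^ 2 + 2 * m * n * y) * x ^ 2) /
          (x ^ 2 * (1 + m * x + n * y * x) ^ 2 * Real.log 2) ∧
      -(2 + 4 * (n * y + m) * x + (m ^ 2 + n ^ 2 * y ^ 2 + 2 * m * n * y) * x ^ 2) /
          (x ^ 2 * (1 + m * x + n * y * x) ^ 2 * Real.log 2) < 0 := by
  set a : ℝ := m + n * y with ha_def
  have ha : 0 < a := by positivity
  set f : ℝ → ℝ := fun x : ℝ => Real.logb 2 (m * n * x ^ 2 * y / (m * x + n * x * y + 1))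
    with hf_def
  set F : ℝ → ℝ := fun x : ℝ =>
    (Real.log (m * n * y) + (2 * Real.log x - Real.log (1 + a * x))) / Real.log 2 with hF_def
  have hlog2 : Real.log 2 ≠ 0 := by
    have := Real.log_pos (by norm_num : (1:ℝ) < 2); linarith
  -- f = F on Ioi 0
  have hEq : EqOn f F (Ioi 0) := by
    intro x hx
    have hx : (0:ℝ) < x := hx
    have hxne : x ≠ 0 := hx.ne'
    have haff : (0:ℝ) < 1 + a * x := aux_affine_pos ha hx
    have hnum : m * n * x ^ 2 * y = (m * n * y) * x ^ 2 := by ring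
    have hden : m * x + n * x * y + 1 = 1 + a * x := by rw [ha_def]; ring
    simp only [hf_def, hF_def, Real.logb]
    congr 1
    rw [hnum, hden, Real.log_div (by positivity) haff.ne',
      Real.log_mul (by positivity) (by positivity), Real.log_pow]
    push_cast; ring
  -- first derivative of f on Ioi 0
  have hd1 : ∀ x ∈ Ioi (0:ℝ), deriv f x = (2 / x - a / (1 + a * x)) / Real.log 2 := by
    intro x hx
    have hx : (0:ℝ) < x := hx
    have hfe : f =ᶠ[nhds x] F :=
      Filter.eventuallyEq_of_mem (isOpen_Ioi.mem_nhds hx) hEq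
    rw [hfe.deriv_eq]
    exact (aux_hd1 (Real.log (m * n * y)) a ha hx).deriv
  -- second derivative
  have hd2 : ∀ x ∈ Ioi (0:ℝ),
      deriv (deriv f) x = (-2 / x ^ 2 + a ^ 2 / (1 + a * x) ^ 2) / Real.log 2 := by
    intro x hx
    have hx : (0:ℝ) < x := hx
    have hfe : deriv f =ᶠ[nhds x]
        (fun x : ℝ => (2 / x - a / (1 + a * x)) / Real.log 2) :=
      Filter.eventuallyEq_of_mem (isOpen_Ioi.mem_nhds hx) hd1
    rw [hfe.deriv_eq]
    exact (aux_hd2 a ha hx).deriv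
  -- rewrite second derivative into target form
  have hform : ∀ x : ℝ, 0 < x →
      (-2 / x ^ 2 + a ^ 2 / (1 + a * x) ^ 2) / Real.log 2 =
      -(2 + 4 * (n * y + m) * x + (m ^ 2 + n ^ 2 * y ^ 2 + 2 * m * n * y) * x ^ 2) /
        (x ^ 2 * (1 + m * x + n * y * x) ^ 2 * Real.log 2) := by
    intro x hx
    have hden : 1 + m * x + n * y * x = 1 + a * x := by rw [ha_def]; ring
    rw [hden]
    have haff : (0:ℝ) < 1 + a * x := aux_affine_pos ha hx
    have hxne : x ≠ 0 := hx.ne'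
    rw [div_add_div _ _ (by positivity : (x:ℝ) ^ 2 ≠ 0) (by positivity : ((1:ℝ) + a * x) ^ 2 ≠ 0),
      div_div]
    congr 1
    rw [ha_def]; ring
  have hneg : ∀ x : ℝ, 0 < x →
      -(2 + 4 * (n * y + m) * x + (m ^ 2 + n ^ 2 * y ^ 2 + 2 * m * n * y) * x ^ 2) /
        (x ^ 2 * (1 + m * x + n * y * x) ^ 2 * Real.log 2) < 0 := by
    intro x hx
    apply div_neg_of_neg_of_pos
    · have : (0:ℝ) < 2 + 4 * (n * y + m) * x + (m ^ 2 + n ^ 2 * y ^ 2 + 2 * m * n * y) * x ^ 2 :=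
        by positivity
      linarith
    · have h2 : (0:ℝ) < Real.log 2 := Real.log_pos (by norm_num)
      have : (0:ℝ) < 1 + m * x + n * y * x := by positivity
      positivity
  constructor
  · -- concavity
    have hcont : ContinuousOn f (Ioi 0) := by
      apply ContinuousOn.congr (s := Ioi (0:ℝ)) _ hEq
      apply ContinuousOn.div_const
      apply ContinuousOn.add continuousOn_const
      apply ContinuousOn.sub
      · exact (Real.continuousOn_log.mono (by intro x hx; exact ne_of_gt hx)).const_smul 2
        |>.congr (fun x _ => by simp [smul_eq_mul])
      · intro x hx
        have hx : (0:ℝ) < x := hx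
        have hc : ContinuousAt (fun t : ℝ => 1 + a * t) x :=
          (continuous_const.add (continuous_const.mul continuous_id)).continuousAt
        exact (hc.log (aux_affine_pos ha hx).ne').continuousWithinAt
    refine (strictConcaveOn_of_deriv2_neg (convex_Ioi 0) hcont ?_).concaveOn
    intro x hx
    rw [interior_Ioi] at hx
    have hx' : (0:ℝ) < x := hx
    have : deriv^[2] f x = deriv (deriv f) x := by
      simp [Function.iterate_succ, Function.iterate_zero, Function.comp]
    rw [this, hd2 x hx, hform x hx']
    exact hneg x hx'
  · intro x hx
    exact ⟨by rw [hd2 x hx, hform x hx], hneg x hx⟩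
end

section
/- Fix m > 0, n > 0, N ≥ 1, and a vector σ ∈ ℝ^N of positive numbers. Let U_1,...,U_N, V_1,...,V_N be independent exponential random variables with rate 1, and for a vector λ ∈ ℝ^N of positive numbers define C_I^h(λ) = E[ (1/2) log₂( m n W² Y / (m W + n W Y + 1) ) ], where W = Σ_{i=1}^N λ_i U_i and Y = Σ_{m'=1}^N σ_{m'} V_{m'}. Then C_I^h is Schur-concave in λ: if λ and λ' are vectors of positive numbers with λ ≻ λ', then C_I^h(λ) ≤ C_I^h(λ'). -/
open MeasureTheory ProbabilityTheory Finset


lemma abel_ineq (N : ℕ) (F d : ℕ → ℝ) (hF : ∀ i, i + 1 < N → F i ≤ F (i + 1))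
    (hD : ∀ k, 0 < k → k < N → (∑ i ∈ range k, d i) ≤ 0)
    (hDN : ∑ i ∈ range N, d i = 0) : 0 ≤ ∑ i ∈ range N, F i * d i := by
  have habel := Finset.sum_range_by_parts F d N
  simp only [smul_eq_mul] at habel
  rw [habel, hDN, mul_zero, zero_sub]
  rw [neg_nonneg]
  apply Finset.sum_nonpos
  intro i hi
  rw [Finset.mem_range] at hi
  have h1 : i + 1 < N := by omega
  have h2 : F i ≤ F (i + 1) := hF i h1
  have h3 : (∑ j ∈ range (i + 1), d j) ≤ 0 := hD (i + 1) (by omega) h1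
  exact mul_nonpos_of_nonneg_of_nonpos (by linarith) h3

lemma filter_sum_eq {N k : ℕ} (hk : k ≤ N) (v : Fin N → ℝ) :
    ∑ i ∈ univ.filter (fun i : Fin N => (i : ℕ) < k), v i
      = ∑ j ∈ range k, (if h : j < N then v ⟨j, h⟩ else 0) := by
  refine Finset.sum_nbij (fun i => (i : ℕ)) ?_ ?_ ?_ ?_
  · intro i hi
    simp only [mem_filter] at hi
    simpa using hi.2
  · intro i hi j hj hij
    exact Fin.val_injective hij
  · intro j hj
    rw [Finset.coe_filter]
    simp only [Set.mem_image, Finset.mem_coe, Finset.mem_range] at hj ⊢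
    have hjN : j < N := lt_of_lt_of_le hj hk
    exact ⟨⟨j, hjN⟩, by simp [hj], rfl⟩
  · intro i hi
    simp [i.isLt]


lemma concave_aux (c A : ℝ) (hc : 0 ≤ c) :
    ConcaveOn ℝ (Set.Ioi 0) (fun w : ℝ => A + (2 * Real.log w - Real.log (c * w + 1))) := by
  have hint : interior (Set.Ioi (0:ℝ)) = Set.Ioi 0 := interior_Ioi
  have hpos : ∀ x : ℝ, 0 < x → 0 < c * x + 1 := by
    intro x hx; nlinarith [mul_nonneg hc hx.le]
  apply concaveOn_of_hasDerivWithinAt2_nonpos (f' := fun x => 2 * x⁻¹ - (c * x + 1)⁻¹ * c)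
    (f'' := fun x => 2 * -((x ^ 2)⁻¹) - -(((c * x + 1) ^ 2)⁻¹) * c * c) (convex_Ioi 0)
  · intro x hx
    have hx0 : x ≠ 0 := ne_of_gt hx
    have hcx : c * x + 1 ≠ 0 := ne_of_gt (hpos x hx)
    have h1 : ContinuousAt (fun w : ℝ => c * w + 1) x := by fun_prop
    exact ContinuousAt.continuousWithinAt
      ((((Real.continuousAt_log hx0).const_mul 2).sub
        (ContinuousAt.comp (x := x) (Real.continuousAt_log hcx) h1)).const_add A)
  · intro x hx
    rw [hint] at hx
    have hx0 : x ≠ 0 := ne_of_gt hx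
    have hcx : c * x + 1 ≠ 0 := ne_of_gt (hpos x hx)
    have h2 : HasDerivAt (fun w : ℝ => c * w + 1) c x := by
      simpa using ((hasDerivAt_id x).const_mul c).add_const 1
    have h3 : HasDerivAt (fun w : ℝ => Real.log (c * w + 1)) ((c * x + 1)⁻¹ * c) x :=
      by have := (Real.hasDerivAt_log hcx).comp x h2; exact this
    have h4 : HasDerivAt (fun w : ℝ => A + (2 * Real.log w - Real.log (c * w + 1)))
        (2 * x⁻¹ - (c * x + 1)⁻¹ * c) x :=
      (((Real.hasDerivAt_log hx0).const_mul 2).sub h3).const_add A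
    exact h4.hasDerivWithinAt
  · intro x hx
    rw [hint] at hx
    have hx0 : x ≠ 0 := ne_of_gt hx
    have hcx : c * x + 1 ≠ 0 := ne_of_gt (hpos x hx)
    have h2 : HasDerivAt (fun w : ℝ => c * w + 1) c x := by
      simpa using ((hasDerivAt_id x).const_mul c).add_const 1
    have h5 : HasDerivAt (fun w : ℝ => (c * w + 1)⁻¹) (-(((c * x + 1) ^ 2)⁻¹) * c) x :=
      (hasDerivAt_inv hcx).comp x h2
    have h6 : HasDerivAt (fun w : ℝ => 2 * w⁻¹ - (c * w + 1)⁻¹ * c)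
        (2 * -((x ^ 2)⁻¹) - -(((c * x + 1) ^ 2)⁻¹) * c * c) x :=
      ((hasDerivAt_inv hx0).const_mul 2).sub (h5.mul_const c)
    exact h6.hasDerivWithinAt
  · intro x hx
    rw [hint] at hx
    have hx2 : (0:ℝ) < x ^ 2 := pow_pos hx 2
    have hcx2 : (0:ℝ) < (c * x + 1) ^ 2 := by
      have := hpos x hx; positivity
    have key : c * c * x ^ 2 ≤ 2 * (c * x + 1) ^ 2 := by
      nlinarith [mul_nonneg hc hx.le, sq_nonneg (c * x)]
    have h7 : c * c * ((c * x + 1) ^ 2)⁻¹ ≤ 2 * (x ^ 2)⁻¹ := by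
      rw [← div_eq_mul_inv, ← div_eq_mul_inv, div_le_div_iff₀ hcx2 hx2]
      nlinarith [key]
    nlinarith [h7]

section MeasureLemmas

lemma exp_null_Iic : expMeasure 1 (Set.Iic 0) = 0 := by
  rw [expMeasure, gammaMeasure, withDensity_apply _ measurableSet_Iic]
  have h : (volume : Measure ℝ).restrict (Set.Iic (0:ℝ)) = volume.restrict (Set.Iio 0) :=
    Measure.restrict_congr_set Iio_ae_eq_Iic.symm
  rw [show (∫⁻ a in Set.Iic (0:ℝ), gammaPDF 1 1 a) = ∫⁻ a in Set.Iio (0:ℝ), gammaPDF 1 1 a by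
    rw [h]]
  exact lintegral_gammaPDF_of_nonpos le_rfl

lemma measurable_gammaPDF11 : Measurable (gammaPDF 1 1) :=
  (measurable_gammaPDFReal 1 1).ennreal_ofReal

lemma integrable_expMeasure_of (g : ℝ → ℝ) (hg : Measurable g)
    (hbound : IntegrableOn (fun x => g x * Real.exp (-x)) (Set.Ioi 0) volume) :
    Integrable g (expMeasure 1) := by
  rw [expMeasure, gammaMeasure]
  rw [integrable_withDensity_iff measurable_gammaPDF11
    (Filter.Eventually.of_forall fun x => ENNReal.ofReal_lt_top)]
  have heq : (fun x => g x * (gammaPDF 1 1 x).toReal)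
      = Set.indicator (Set.Ici 0) (fun x => g x * Real.exp (-x)) := by
    funext x
    by_cases hx : 0 ≤ x
    · rw [Set.indicator_apply, if_pos (Set.mem_Ici.mpr hx)]
      congr 1
      rw [gammaPDF_of_nonneg hx, ENNReal.toReal_ofReal (by positivity)]
      simp [Real.Gamma_one, Real.rpow_zero, Real.one_rpow]
    · rw [Set.indicator_apply, if_neg (fun h => hx (Set.mem_Ici.mp h)), gammaPDF_eq, if_neg hx]
      simp
  rw [heq, integrable_indicator_iff measurableSet_Ici]
  rwa [integrableOn_Ici_iff_integrableOn_Ioi]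

lemma integrable_id_expMeasure : Integrable (fun x : ℝ => x) (expMeasure 1) := by
  apply integrable_expMeasure_of _ measurable_id
  have h := Real.GammaIntegral_convergent (by norm_num : (0:ℝ) < 2)
  apply h.congr_fun ?_ measurableSet_Ioi
  intro x hx
  dsimp only [id_eq]
  rw [show (2:ℝ) - 1 = 1 by norm_num, Real.rpow_one]
  ring

lemma abs_log_le (x : ℝ) (hx : 0 < x) :
    |Real.log x| ≤ 2 * x ^ ((1:ℝ)/2 - 1) + x := by
  have hr : ((1:ℝ)/2 - 1) = -(1/2) := by norm_num
  have hrp : (0:ℝ) < x ^ ((1:ℝ)/2 - 1) := Real.rpow_pos_of_pos hx _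
  rw [abs_le]
  constructor
  · have h1 : Real.log (x ^ ((1:ℝ)/2 - 1)) ≤ x ^ ((1:ℝ)/2 - 1) - 1 :=
      Real.log_le_sub_one_of_pos hrp
    rw [Real.log_rpow hx, hr] at h1
    nlinarith [hrp, hx]
  · have h2 : Real.log x ≤ x - 1 := Real.log_le_sub_one_of_pos hx
    nlinarith [hrp, hx]

lemma integrable_log_expMeasure : Integrable Real.log (expMeasure 1) := by
  apply integrable_expMeasure_of _ Real.measurable_log
  have h1 := Real.GammaIntegral_convergent (by norm_num : (0:ℝ) < 1/2)
  have h2 := Real.GammaIntegral_convergent (by norm_num : (0:ℝ) < 2)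
  have hG : IntegrableOn
      (fun x => 2 * (Real.exp (-x) * x ^ ((1:ℝ)/2 - 1)) + Real.exp (-x) * x ^ ((2:ℝ) - 1))
      (Set.Ioi 0) volume := (h1.const_mul 2).add h2
  apply Integrable.mono' hG
  · exact (Real.measurable_log.mul (by fun_prop)).aestronglyMeasurable
  · rw [ae_restrict_iff' measurableSet_Ioi]
    apply Filter.Eventually.of_forall
    intro x hx
    rw [Set.mem_Ioi] at hx
    have hb := abs_log_le x hx
    have hexp : (0:ℝ) < Real.exp (-x) := Real.exp_pos _
    rw [Real.norm_eq_abs, abs_mul, abs_of_pos hexp]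
    calc |Real.log x| * Real.exp (-x) ≤ (2 * x ^ ((1:ℝ)/2 - 1) + x) * Real.exp (-x) :=
          mul_le_mul_of_nonneg_right hb hexp.le
      _ = 2 * (Real.exp (-x) * x ^ ((1:ℝ)/2 - 1)) + Real.exp (-x) * x ^ ((2:ℝ) - 1) := by
          rw [show (2:ℝ) - 1 = 1 by norm_num, Real.rpow_one]; ring

lemma map_eval_pi {ι : Type*} [Fintype ι] (μ : ι → Measure ℝ) [∀ i, IsProbabilityMeasure (μ i)]
    (i : ι) : MeasurePreserving (Function.eval i) (Measure.pi μ) (μ i) := by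
  classical
  refine ⟨measurable_pi_apply i, ?_⟩
  ext s hs
  rw [Measure.map_apply (measurable_pi_apply i) hs, Set.eval_preimage, Measure.pi_pi]
  rw [Finset.prod_eq_single i]
  · rw [Function.update_self]
  · intro j _ hj
    rw [Function.update_of_ne hj]
    simp
  · simp

lemma pi_comp_perm_right {ι : Type*} [Fintype ι] (ν : Measure ℝ) [IsProbabilityMeasure ν]
    (e : ι ≃ ι) :
    MeasurePreserving (fun x : ι → ℝ => x ∘ e) (Measure.pi fun _ => ν) (Measure.pi fun _ => ν) := by
  have hmeas : Measurable (fun x : ι → ℝ => x ∘ e) :=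
    measurable_pi_lambda _ fun i => measurable_pi_apply _
  refine ⟨hmeas, ?_⟩
  refine (Measure.pi_eq fun s hs => ?_).symm
  rw [Measure.map_apply hmeas (MeasurableSet.univ_pi hs)]
  have hpre : (fun x : ι → ℝ => x ∘ e) ⁻¹' (Set.pi Set.univ s)
      = Set.pi Set.univ (fun j => s (e.symm j)) := by
    ext x
    simp only [Set.mem_preimage, Set.mem_pi, Set.mem_univ, true_implies, Function.comp_apply]
    constructor
    · intro h j; have := h (e.symm j); simpa using this
    · intro h i; have := h (e i); simpa using this
  rw [hpre, Measure.pi_pi]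
  exact Equiv.prod_comp e.symm (fun i => ν (s i))

lemma map_tuple_pi {ι : Type*} [Fintype ι] {Ω : Type*} [MeasurableSpace Ω] (P : Measure Ω)
    [IsProbabilityMeasure P] (X : ι → Ω → ℝ) (hX : ∀ i, Measurable (X i))
    (hind : iIndepFun X P) :
    Measure.map (fun ω i => X i ω) P = Measure.pi (fun i => Measure.map (X i) P) := by
  have hmeas : Measurable (fun ω i => X i ω) := measurable_pi_lambda _ hX
  haveI : ∀ i, IsProbabilityMeasure (Measure.map (X i) P) :=
    fun i => Measure.isProbabilityMeasure_map (hX i).aemeasurable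
  refine (Measure.pi_eq fun s hs => ?_).symm
  rw [Measure.map_apply hmeas (MeasurableSet.univ_pi hs)]
  have hpre : (fun ω i => X i ω) ⁻¹' (Set.pi Set.univ s) = ⋂ i ∈ Finset.univ, X i ⁻¹' s i := by
    ext ω
    simp [Set.mem_pi]
  rw [hpre, hind.measure_inter_preimage_eq_mul Finset.univ (fun i _ => hs i)]
  exact Finset.prod_congr rfl fun i _ => (Measure.map_apply (hX i) (hs i)).symm

end MeasureLemmas

/-- `a` majorizes `b`: there are permutations sorting `a` and `b` nonincreasingly such
that every initial partial sum of the sorted `a` dominates that of the sorted `b`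
(for `k = 1, …, N−1`; `k = 0` is trivial), with equal total sums. -/
def Majorizes {N : ℕ} (a b : Fin N → ℝ) : Prop :=
  ∃ p q : Equiv.Perm (Fin N),
    Antitone (a ∘ p) ∧ Antitone (b ∘ q) ∧
    (∀ k : ℕ, k < N →
      ∑ i ∈ univ.filter (fun i : Fin N => (i : ℕ) < k), b (q i) ≤
        ∑ i ∈ univ.filter (fun i : Fin N => (i : ℕ) < k), a (p i)) ∧
    ∑ i, a i = ∑ i, b i

lemma exists_perm_dot_le {N : ℕ} (a b c : Fin N → ℝ) (hmaj : Majorizes a b) :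
    ∃ π : Equiv.Perm (Fin N), ∑ i, c i * a (π i) ≤ ∑ i, c i * b i := by
  obtain ⟨p, q, hap, hbq, hpartial, htot⟩ := hmaj
  set e : Equiv.Perm (Fin N) := Tuple.sort (c ∘ q) with he
  set f : Fin N → ℝ := (c ∘ q) ∘ e with hf
  have hfmono : Monotone f := Tuple.monotone_sort (c ∘ q)
  set u : Fin N → ℝ := a ∘ p with hu
  set v : Fin N → ℝ := b ∘ q with hv
  -- Claim B : ∑ f u ≤ ∑ f v
  have claimB : ∑ i, f i * u i ≤ ∑ i, f i * v i := by
    set F : ℕ → ℝ := fun j => if h : j < N then f ⟨j, h⟩ else 0 with hF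
    set d : ℕ → ℝ := fun j => if h : j < N then v ⟨j, h⟩ - u ⟨j, h⟩ else 0 with hd
    have hdsum : ∀ k, k ≤ N → ∑ j ∈ range k, d j =
        (∑ i ∈ univ.filter (fun i : Fin N => (i : ℕ) < k), v i) -
        (∑ i ∈ univ.filter (fun i : Fin N => (i : ℕ) < k), u i) := by
      intro k hk
      rw [filter_sum_eq hk v, filter_sum_eq hk u, ← Finset.sum_sub_distrib]
      apply Finset.sum_congr rfl
      intro j hj
      rw [Finset.mem_range] at hj
      have : j < N := lt_of_lt_of_le hj hk
      simp [hd, this]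
    have huniv : (univ.filter (fun i : Fin N => (i : ℕ) < N)) = (univ : Finset (Fin N)) := by
      apply Finset.filter_true_of_mem
      intro i _; exact i.isLt
    have habel : 0 ≤ ∑ j ∈ range N, F j * d j := by
      apply abel_ineq
      · intro i hi
        have h1 : i < N := by omega
        simp only [hF]
        rw [dif_pos h1, dif_pos hi]
        exact hfmono (by simp [Fin.le_def])
      · intro k hk0 hkN
        rw [hdsum k (le_of_lt hkN)]
        have := hpartial k hkN
        simp only [hv, hu, Function.comp_apply]
        linarith [hpartial k hkN]
      · rw [hdsum N le_rfl, huniv]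
        have h1 : ∑ i, v i = ∑ i, b i := Equiv.sum_comp q b
        have h2 : ∑ i, u i = ∑ i, a i := Equiv.sum_comp p a
        simp only [hv, hu, Function.comp_apply] at h1 h2 ⊢
        rw [h1, h2, htot, sub_self]
    have hconv : ∑ j ∈ range N, F j * d j = ∑ i : Fin N, f i * (v i - u i) := by
      rw [← Fin.sum_univ_eq_sum_range (fun j => F j * d j) N]
      apply Finset.sum_congr rfl
      intro i _
      simp only [hF, hd]
      rw [dif_pos i.isLt, dif_pos i.isLt]
    rw [hconv] at habel
    have : ∑ i : Fin N, f i * (v i - u i) = (∑ i, f i * v i) - ∑ i, f i * u i := by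
      rw [← Finset.sum_sub_distrib]; apply Finset.sum_congr rfl; intro i _; ring
    linarith [habel, this ▸ habel]
  -- Claim A : ∑ f v ≤ ∑ f (v ∘ e)
  have hanti : Antivary f v := by
    intro i j hij
    by_cases hle : i ≤ j
    · exact absurd (hbq hle) (not_le.mpr hij)
    · exact hfmono (le_of_not_ge hle)
  have claimA : ∑ i, f i * v i ≤ ∑ i, f i * v (e i) :=
    hanti.sum_mul_le_sum_mul_comp_perm (σ := e)
  -- identifications
  set r : Equiv.Perm (Fin N) := e.trans q with hr
  have hA : ∑ i, f i * v (e i) = ∑ i, c i * b i := by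
    have : ∀ i, f i * v (e i) = (fun i => c i * b i) (r i) := by
      intro i; simp [hf, hv, hr, Function.comp]
    rw [Finset.sum_congr rfl (fun i _ => this i)]
    exact Equiv.sum_comp r (fun i => c i * b i)
  refine ⟨r.symm.trans p, ?_⟩
  have hB : ∑ i, c i * a ((r.symm.trans p) i) = ∑ i, f i * u i := by
    have : ∀ j, f j * u j = (fun i => c i * a (p (r.symm i))) (r j) := by
      intro j; simp [hf, hu, hr, Function.comp]
    rw [Finset.sum_congr rfl (fun j _ => this j), Equiv.sum_comp r (fun i => c i * a (p (r.symm i)))]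
    rfl
  rw [hB]
  linarith

lemma majorizes_mem_convexHull {N : ℕ} (a b : Fin N → ℝ) (hmaj : Majorizes a b) :
    b ∈ convexHull ℝ (Set.range fun π : Equiv.Perm (Fin N) => a ∘ ⇑π) := by
  by_contra hb
  have hfin : (Set.range fun π : Equiv.Perm (Fin N) => a ∘ ⇑π).Finite := Set.finite_range _
  obtain ⟨φ, t, ht1, ht2⟩ :=
    geometric_hahn_banach_point_closed (convex_convexHull ℝ _) (hfin.isClosed_convexHull (𝕜 := ℝ)) hb
  set c : Fin N → ℝ := fun i => φ (Pi.single i 1) with hc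
  have hrep : ∀ y : Fin N → ℝ, φ y = ∑ i, c i * y i := by
    intro y
    have hsingle : ∀ i : Fin N, Pi.single i (y i) = y i • (Pi.single i (1 : ℝ) : Fin N → ℝ) := by
      intro i; funext j
      by_cases h : j = i <;> simp [Pi.single_apply, h]
    calc φ y = φ (∑ i, Pi.single i (y i)) := by rw [Finset.univ_sum_single y]
      _ = ∑ i, φ (Pi.single i (y i)) := map_sum φ _ _
      _ = ∑ i, c i * y i := by
          apply Finset.sum_congr rfl
          intro i _
          rw [hsingle i, φ.map_smul, smul_eq_mul, mul_comm]
  obtain ⟨π, hπ⟩ := exists_perm_dot_le a b c hmaj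
  have h2 : t < φ (a ∘ ⇑π) := ht2 _ (subset_convexHull ℝ _ ⟨π, rfl⟩)
  rw [hrep (a ∘ ⇑π)] at h2
  rw [hrep b] at ht1
  simp only [Function.comp_apply] at h2
  linarith

noncomputable section

variable {N : ℕ}

def Wf (lam : Fin N → ℝ) (x : (Fin N ⊕ Fin N) → ℝ) : ℝ := ∑ i, lam i * x (Sum.inl i)
def Yf (σ : Fin N → ℝ) (x : (Fin N ⊕ Fin N) → ℝ) : ℝ := ∑ j, σ j * x (Sum.inr j)
def Gf (m n : ℝ) (σ lam : Fin N → ℝ) (x : (Fin N ⊕ Fin N) → ℝ) : ℝ :=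
  (1/2) * Real.logb 2 (m * n * (Wf lam x) ^ 2 * Yf σ x /
    (m * Wf lam x + n * Wf lam x * Yf σ x + 1))

lemma logform {m n : ℝ} (hm : 0 < m) (hn : 0 < n) {w y : ℝ} (hw : 0 < w) (hy : 0 < y) :
    (1/2 : ℝ) * Real.logb 2 (m * n * w ^ 2 * y / (m * w + n * w * y + 1)) =
      (1 / (2 * Real.log 2)) *
        (Real.log (m * n * y) + (2 * Real.log w - Real.log ((m + n * y) * w + 1))) := by
  have hc : 0 < m + n * y := by positivity
  have hD : 0 < (m + n * y) * w + 1 := by positivity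
  have hnum : m * n * w ^ 2 * y = (m * n * y) * w ^ 2 := by ring
  have hden : m * w + n * w * y + 1 = (m + n * y) * w + 1 := by ring
  have hmny : (0:ℝ) < m * n * y := by positivity
  have hw2 : (0:ℝ) < w ^ 2 := by positivity
  rw [hnum, hden, Real.logb, Real.log_div (by positivity) hD.ne',
    Real.log_mul hmny.ne' hw2.ne', Real.log_pow]
  have hlog2 : Real.log 2 ≠ 0 := (Real.log_pos one_lt_two).ne'
  field_simp
  ring

lemma measurable_Wf (lam : Fin N → ℝ) : Measurable (Wf lam) := by
  apply Finset.measurable_sum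
  intro i _
  exact (measurable_pi_apply _).const_mul _

lemma measurable_Yf (σ : Fin N → ℝ) : Measurable (Yf σ) := by
  apply Finset.measurable_sum
  intro i _
  exact (measurable_pi_apply _).const_mul _

lemma measurable_Gf (m n : ℝ) (σ lam : Fin N → ℝ) : Measurable (Gf m n σ lam) := by
  have h1 : Measurable fun x => m * n * (Wf lam x) ^ 2 * Yf σ x /
      (m * Wf lam x + n * Wf lam x * Yf σ x + 1) := by
    apply Measurable.div
    · exact (((measurable_Wf lam).pow_const 2).const_mul _).mul (measurable_Yf σ)
    · exact ((((measurable_Wf lam).const_mul m)).add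
        (((measurable_Wf lam).const_mul n).mul (measurable_Yf σ))).add_const 1
  have hlogb : Measurable (Real.logb 2) := Real.measurable_log.div_const _
  exact (hlogb.comp h1).const_mul _

section PiSpace

variable (hN : 0 < N)

abbrev emM : Measure ℝ := expMeasure 1

instance : IsProbabilityMeasure (emM) := isProbabilityMeasure_expMeasure one_pos

abbrev piMu (N : ℕ) : Measure ((Fin N ⊕ Fin N) → ℝ) := Measure.pi fun _ => emM

lemma ae_pos_piMu : ∀ᵐ x ∂(piMu N), ∀ k : Fin N ⊕ Fin N, 0 < x k := by
  rw [ae_all_iff]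
  intro k
  have hev := map_eval_pi (fun _ : Fin N ⊕ Fin N => emM) k
  rw [ae_iff]
  have hset : {x : (Fin N ⊕ Fin N) → ℝ | ¬ 0 < x k} = Function.eval k ⁻¹' Set.Iic 0 := by
    ext x; simp [not_lt]
  rw [hset, ← Measure.map_apply hev.measurable measurableSet_Iic, hev.map_eq]
  exact exp_null_Iic

lemma integrable_eval_comp {g : ℝ → ℝ} (hg : Integrable g emM) (k : Fin N ⊕ Fin N) :
    Integrable (fun x : (Fin N ⊕ Fin N) → ℝ => g (x k)) (piMu N) :=
  ((map_eval_pi (fun _ => emM) k).integrable_comp hg.aestronglyMeasurable).mpr hg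

lemma integrable_Wf {lam : Fin N → ℝ} : Integrable (Wf lam) (piMu N) := by
  apply integrable_finset_sum
  intro i _
  exact (integrable_eval_comp integrable_id_expMeasure (Sum.inl i)).const_mul _

lemma integrable_Yf {σ : Fin N → ℝ} : Integrable (Yf σ) (piMu N) := by
  apply integrable_finset_sum
  intro i _
  exact (integrable_eval_comp integrable_id_expMeasure (Sum.inr i)).const_mul _

lemma integrable_WYf {lam σ : Fin N → ℝ} :
    Integrable (fun x => Wf lam x * Yf σ x) (piMu N) := by
  have mp := measurePreserving_sumPiEquivProdPi (fun _ : Fin N ⊕ Fin N => (emM : Measure ℝ))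
  set e := MeasurableEquiv.sumPiEquivProdPi (fun _ : Fin N ⊕ Fin N => ℝ)
  have hWY : (fun x => Wf lam x * Yf σ x) =
      (fun z : (Fin N → ℝ) × (Fin N → ℝ) => (∑ i, lam i * z.1 i) * (∑ j, σ j * z.2 j)) ∘ e := by
    funext x; rfl
  rw [hWY]
  have hint1 : Integrable (fun u : Fin N → ℝ => ∑ i, lam i * u i) (Measure.pi fun _ => emM) := by
    apply integrable_finset_sum
    intro i _
    exact (((map_eval_pi (fun _ : Fin N => emM) i).integrable_comp
      integrable_id_expMeasure.aestronglyMeasurable).mpr integrable_id_expMeasure).const_mul _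
  have hint2 : Integrable (fun u : Fin N → ℝ => ∑ j, σ j * u j) (Measure.pi fun _ => emM) := by
    apply integrable_finset_sum
    intro j _
    exact (((map_eval_pi (fun _ : Fin N => emM) j).integrable_comp
      integrable_id_expMeasure.aestronglyMeasurable).mpr integrable_id_expMeasure).const_mul _
  have hprod : Integrable
      (fun z : (Fin N → ℝ) × (Fin N → ℝ) => (∑ i, lam i * z.1 i) * (∑ j, σ j * z.2 j))
      ((Measure.pi fun _ : Fin N => (emM : Measure ℝ)).prod (Measure.pi fun _ : Fin N => emM)) :=
    hint1.mul_prod hint2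
  exact (mp.integrable_comp hprod.aestronglyMeasurable).mpr hprod

end PiSpace
end

noncomputable section Part5b
variable {N : ℕ}

lemma abs_log_sum_bound {a b : ℝ} (ha : 0 < a) (hb : 0 < b) {S : ℝ} (hab : a * b ≤ S)
    (hS : 0 < S) : |Real.log S| ≤ S + (|Real.log a| + |Real.log b|) := by
  have h1 : Real.log (a * b) ≤ Real.log S := Real.log_le_log (by positivity) hab
  have h2 : Real.log (a * b) = Real.log a + Real.log b := Real.log_mul ha.ne' hb.ne'
  have h3 : Real.log S ≤ S := (Real.log_le_sub_one_of_pos hS).trans (by linarith)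
  rw [abs_le]
  constructor
  · have := neg_abs_le (Real.log a)
    have := neg_abs_le (Real.log b)
    linarith
  · have := abs_nonneg (Real.log a)
    have := abs_nonneg (Real.log b)
    linarith

lemma integrable_Gf {m n : ℝ} (hm : 0 < m) (hn : 0 < n) (hN : 0 < N)
    {σ lam : Fin N → ℝ} (hσ : ∀ i, 0 < σ i) (hlam : ∀ i, 0 < lam i) :
    Integrable (Gf m n σ lam) (piMu N) := by
  haveI : Nonempty (Fin N) := ⟨⟨0, hN⟩⟩
  set i₀ : Fin N := ⟨0, hN⟩
  set B : ((Fin N ⊕ Fin N) → ℝ) → ℝ := fun x =>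
    |Real.log (m * n)| + 2 * (Wf lam x + (|Real.log (lam i₀)| + |Real.log (x (Sum.inl i₀))|))
      + (Yf σ x + (|Real.log (σ i₀)| + |Real.log (x (Sum.inr i₀))|))
      + (m * Wf lam x + n * (Wf lam x * Yf σ x)) with hB
  have hBint : Integrable B (piMu N) := by
    apply Integrable.add
    apply Integrable.add
    apply Integrable.add
    · exact integrable_const _
    · exact (integrable_Wf.add ((integrable_const _).add
        (integrable_eval_comp integrable_log_expMeasure (Sum.inl i₀)).abs)).const_mul 2
    · exact integrable_Yf.add ((integrable_const _).add
        (integrable_eval_comp integrable_log_expMeasure (Sum.inr i₀)).abs)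
    · exact (integrable_Wf.const_mul m).add (integrable_WYf.const_mul n)
  apply Integrable.mono' hBint (measurable_Gf m n σ lam).aestronglyMeasurable
  filter_upwards [ae_pos_piMu] with x hx
  set W := Wf lam x with hWdef
  set Y := Yf σ x with hYdef
  have hW : 0 < W := Finset.sum_pos (fun i _ => mul_pos (hlam i) (hx _)) Finset.univ_nonempty
  have hY : 0 < Y := Finset.sum_pos (fun i _ => mul_pos (hσ i) (hx _)) Finset.univ_nonempty
  have hWlb : lam i₀ * x (Sum.inl i₀) ≤ W :=
    Finset.single_le_sum (f := fun i => lam i * x (Sum.inl i))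
      (fun i _ => (mul_pos (hlam i) (hx _)).le) (Finset.mem_univ i₀)
  have hYlb : σ i₀ * x (Sum.inr i₀) ≤ Y :=
    Finset.single_le_sum (f := fun i => σ i * x (Sum.inr i))
      (fun i _ => (mul_pos (hσ i) (hx _)).le) (Finset.mem_univ i₀)
  set D : ℝ := m * W + n * W * Y + 1 with hD
  have hDpos : (0:ℝ) < D := by positivity
  have hD1 : (1:ℝ) ≤ D := by nlinarith [mul_pos hm hW, mul_pos (mul_pos hn hW) hY]
  set A : ℝ := m * n * W ^ 2 * Y / D with hA
  have hApos : 0 < A := by positivity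
  -- log decomposition
  have hlogA : Real.log A = Real.log (m * n) + 2 * Real.log W + Real.log Y - Real.log D := by
    rw [hA, Real.log_div (by positivity) hDpos.ne', Real.log_mul (by positivity) hY.ne',
      Real.log_mul (by positivity) (by positivity : (W:ℝ)^2 ≠ 0), Real.log_pow]
    push_cast
    ring
  have hlogW := abs_log_sum_bound (hlam i₀) (hx (Sum.inl i₀)) hWlb hW
  have hlogY := abs_log_sum_bound (hσ i₀) (hx (Sum.inr i₀)) hYlb hY
  have hlogD1 : 0 ≤ Real.log D := Real.log_nonneg hD1
  have hlogD2 : Real.log D ≤ m * W + n * W * Y := by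
    have := Real.log_le_sub_one_of_pos hDpos
    linarith
  have habsA : |Real.log A| ≤ B x := by
    rw [abs_le] at hlogW hlogY ⊢
    constructor
    · rw [hlogA, hB]
      have := neg_abs_le (Real.log (m * n))
      simp only [← hWdef, ← hYdef]
      linarith [hlogW.1, hlogY.1]
    · rw [hlogA, hB]
      have := le_abs_self (Real.log (m * n))
      simp only [← hWdef, ← hYdef]
      linarith [hlogW.2, hlogY.2]
  -- final
  have hGf : Gf m n σ lam x = (1/2) * (Real.log A / Real.log 2) := by
    rw [Gf, Real.logb, ← hWdef, ← hYdef, ← hD, ← hA]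
  rw [Real.norm_eq_abs, hGf]
  have hlog2 : (0.6931471803:ℝ) < Real.log 2 := Real.log_two_gt_d9
  have habs : |(1:ℝ)/2 * (Real.log A / Real.log 2)| =
      (1/2) * (|Real.log A| / Real.log 2) := by
    rw [abs_mul, abs_of_pos (by norm_num : (0:ℝ) < (1:ℝ)/2), abs_div,
      abs_of_pos (by linarith : (0:ℝ) < Real.log 2)]
  rw [habs]
  have h1 : (1:ℝ)/2 * (|Real.log A| / Real.log 2) ≤ |Real.log A| := by
    have hl2 : (0:ℝ) < Real.log 2 := by linarith
    have ht : |Real.log A| / Real.log 2 ≤ 2 * |Real.log A| := by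
      rw [div_le_iff₀ hl2]
      nlinarith [abs_nonneg (Real.log A)]
    linarith
  exact h1.trans habsA

lemma exchange_Gf (m n : ℝ) (σ lam : Fin N → ℝ) (ρ : Equiv.Perm (Fin N)) :
    ∫ x, Gf m n σ (lam ∘ ρ) x ∂(piMu N) = ∫ x, Gf m n σ lam x ∂(piMu N) := by
  set e : (Fin N ⊕ Fin N) ≃ (Fin N ⊕ Fin N) := Equiv.sumCongr ρ.symm (Equiv.refl _) with he
  have mp := pi_comp_perm_right (emM) e
  have hW : ∀ x : (Fin N ⊕ Fin N) → ℝ, Wf lam (x ∘ e) = Wf (lam ∘ ρ) x := by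
    intro x
    rw [Wf, Wf, ← Equiv.sum_comp ρ (fun i => lam i * (x ∘ e) (Sum.inl i))]
    apply Finset.sum_congr rfl
    intro j _
    simp [he]
  have hY : ∀ x : (Fin N ⊕ Fin N) → ℝ, Yf σ (x ∘ e) = Yf σ x := by
    intro x
    rw [Yf, Yf]
    apply Finset.sum_congr rfl
    intro j _
    simp [he]
  have step1 : ∫ x, Gf m n σ (lam ∘ ρ) x ∂(piMu N)
      = ∫ x, Gf m n σ lam (x ∘ e) ∂(piMu N) := by
    congr 1
    funext x
    rw [Gf, Gf, hW, hY]
  have step2 : ∫ y, Gf m n σ lam y ∂(Measure.map (fun x : (Fin N ⊕ Fin N) → ℝ => x ∘ e) (piMu N))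
      = ∫ x, Gf m n σ lam (x ∘ e) ∂(piMu N) :=
    integral_map mp.measurable.aemeasurable (measurable_Gf m n σ lam).aestronglyMeasurable
  rw [step1, ← step2, mp.map_eq]

end Part5b

/-- With `m, n > 0`, `σ` a positive vector, `U_1,…,U_N,V_1,…,V_N`
independent rate-1 exponentials, `W(λ) = Σ λ_i U_i`, `Y = Σ σ_m V_m`, the high-SNR
ergodic capacity `C_I^h(λ) = E[(1/2) log₂(m n W² Y/(m W + n W Y + 1))]` is
Schur-concave in `λ`: `λ ≻ λ'` (both positive) implies `C_I^h(λ) ≤ C_I^h(λ')`. -/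
theorem stmt_13 {Ω : Type*} [MeasurableSpace Ω] (P : Measure Ω) [IsProbabilityMeasure P]
    (m n : ℝ) (hm : 0 < m) (hn : 0 < n) (N : ℕ) (hN : 0 < N)
    (σ : Fin N → ℝ) (hσ : ∀ i, 0 < σ i)
    (U V : Fin N → Ω → ℝ) (hUm : ∀ i, Measurable (U i)) (hVm : ∀ i, Measurable (V i))
    (hindep : iIndepFun (Sum.elim U V) P)
    (hU : ∀ i, Measure.map (U i) P = expMeasure 1)
    (hV : ∀ i, Measure.map (V i) P = expMeasure 1)
    (lam lam' : Fin N → ℝ) (hlam : ∀ i, 0 < lam i) (hlam' : ∀ i, 0 < lam' i)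
    (hmaj : Majorizes lam lam') :
    ∫ ω, (1 / 2 : ℝ) * Real.logb 2
        (m * n * (∑ i, lam i * U i ω) ^ 2 * (∑ j, σ j * V j ω) /
          (m * (∑ i, lam i * U i ω) +
            n * (∑ i, lam i * U i ω) * (∑ j, σ j * V j ω) + 1)) ∂P ≤
      ∫ ω, (1 / 2 : ℝ) * Real.logb 2
        (m * n * (∑ i, lam' i * U i ω) ^ 2 * (∑ j, σ j * V j ω) /
          (m * (∑ i, lam' i * U i ω) +
            n * (∑ i, lam' i * U i ω) * (∑ j, σ j * V j ω) + 1)) ∂P := by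
  classical
  haveI : Nonempty (Fin N) := ⟨⟨0, hN⟩⟩
  have hXm : ∀ k, Measurable (Sum.elim U V k) := by rintro (i | j); exacts [hUm i, hVm j]
  have hTm : Measurable (fun ω k => Sum.elim U V k ω) := measurable_pi_lambda _ hXm
  have hmapX : Measure.map (fun ω k => Sum.elim U V k ω) P = piMu N := by
    rw [map_tuple_pi P (Sum.elim U V) hXm hindep]
    congr 1
    funext k
    cases k with
    | inl i => exact hU i
    | inr j => exact hV j
  have hconv : ∀ l : Fin N → ℝ,
      (∫ ω, (1 / 2 : ℝ) * Real.logb 2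
        (m * n * (∑ i, l i * U i ω) ^ 2 * (∑ j, σ j * V j ω) /
          (m * (∑ i, l i * U i ω) +
            n * (∑ i, l i * U i ω) * (∑ j, σ j * V j ω) + 1)) ∂P)
      = ∫ x, Gf m n σ l x ∂(piMu N) := by
    intro l
    rw [← hmapX, integral_map hTm.aemeasurable (measurable_Gf m n σ l).aestronglyMeasurable]
    rfl
  rw [hconv lam, hconv lam']
  -- convex representation
  have hhull := majorizes_mem_convexHull lam lam' hmaj
  rw [_root_.convexHull_eq] at hhull
  obtain ⟨ι', t, w, z, hw0, hw1, hz, hcomb⟩ := hhull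
  have hzdef : ∀ i ∈ t, ∃ ρ : Equiv.Perm (Fin N), z i = lam ∘ ρ := by
    intro i hi; obtain ⟨ρ, hρ⟩ := hz i hi; exact ⟨ρ, hρ.symm⟩
  choose! ρ hρ using hzdef
  have hlam'eq : lam' = ∑ i ∈ t, w i • z i := by
    rw [← hcomb, Finset.centerMass_eq_of_sum_1 _ _ hw1]
  have hzpos : ∀ i ∈ t, ∀ j, 0 < z i j := by
    intro i hi j
    rw [hρ i hi]
    exact hlam _
  -- pointwise a.e. Jensen
  have hae : ∀ᵐ x ∂(piMu N), ∑ i ∈ t, w i * Gf m n σ (z i) x ≤ Gf m n σ lam' x := by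
    filter_upwards [ae_pos_piMu] with x hx
    have hy : 0 < Yf σ x := Finset.sum_pos (fun j _ => mul_pos (hσ j) (hx _)) Finset.univ_nonempty
    set y := Yf σ x with hydef
    set c : ℝ := m + n * y with hcdef
    have hc : 0 ≤ c := by positivity
    set κ : ℝ := 1 / (2 * Real.log 2) with hκdef
    have hκ : 0 ≤ κ := by
      have := Real.log_two_gt_d9
      rw [hκdef]; positivity
    have conc := (concave_aux c (Real.log (m * n * y)) hc).smul hκ
    have hmemW : ∀ i ∈ t, Wf (z i) x ∈ Set.Ioi (0:ℝ) := by
      intro i hi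
      exact Finset.sum_pos (fun j _ => mul_pos (hzpos i hi j) (hx _)) Finset.univ_nonempty
    have hWpos : ∀ i ∈ t, 0 < Wf (z i) x := fun i hi => hmemW i hi
    have jensen := conc.le_map_sum hw0 hw1 hmemW
    have hWsum : Wf lam' x = ∑ i ∈ t, w i • Wf (z i) x := by
      rw [hlam'eq, Wf]
      simp only [Finset.sum_apply, Pi.smul_apply, smul_eq_mul, Finset.sum_mul]
      rw [Finset.sum_comm]
      apply Finset.sum_congr rfl
      intro i _
      rw [Wf, Finset.mul_sum]
      apply Finset.sum_congr rfl
      intro j _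
      ring
    have hGfeq : ∀ (l : Fin N → ℝ), 0 < Wf l x →
        Gf m n σ l x = (κ • fun w' => Real.log (m * n * y) +
          (2 * Real.log w' - Real.log (c * w' + 1))) (Wf l x) := by
      intro l hWl
      rw [Gf, ← hydef, logform hm hn hWl hy]
      simp only [Pi.smul_apply, smul_eq_mul]
      rfl
    have hWlam' : 0 < Wf lam' x :=
      Finset.sum_pos (fun j _ => mul_pos (hlam' j) (hx _)) Finset.univ_nonempty
    calc ∑ i ∈ t, w i * Gf m n σ (z i) x
        = ∑ i ∈ t, w i • (κ • fun w' => Real.log (m * n * y) +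
            (2 * Real.log w' - Real.log (c * w' + 1))) (Wf (z i) x) := by
          apply Finset.sum_congr rfl
          intro i hi
          rw [smul_eq_mul, hGfeq (z i) (hWpos i hi)]
      _ ≤ (κ • fun w' => Real.log (m * n * y) +
            (2 * Real.log w' - Real.log (c * w' + 1))) (∑ i ∈ t, w i • Wf (z i) x) := jensen
      _ = Gf m n σ lam' x := by rw [← hWsum, ← hGfeq lam' hWlam']
  -- integrate
  have hintz : ∀ i ∈ t, Integrable (Gf m n σ (z i)) (piMu N) := by
    intro i hi
    exact integrable_Gf hm hn hN hσ (hzpos i hi)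
  have hint' : Integrable (Gf m n σ lam') (piMu N) := integrable_Gf hm hn hN hσ hlam'
  have hintsum : Integrable (fun x => ∑ i ∈ t, w i * Gf m n σ (z i) x) (piMu N) :=
    integrable_finset_sum t (fun i hi => (hintz i hi).const_mul _)
  have hle := integral_mono_ae hintsum hint' hae
  rw [integral_finset_sum t (fun i hi => ((hintz i hi).const_mul _ : Integrable
    (fun x => w i * Gf m n σ (z i) x) (piMu N)))] at hle
  have hterm : ∀ i ∈ t, ∫ x, w i * Gf m n σ (z i) x ∂(piMu N)
      = w i * ∫ x, Gf m n σ lam x ∂(piMu N) := by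
    intro i hi
    rw [show (fun x => w i * Gf m n σ (z i) x) = fun x => w i • Gf m n σ (z i) x from rfl,
      integral_smul, smul_eq_mul]
    congr 1
    rw [hρ i hi]
    exact exchange_Gf m n σ lam (ρ i)
  rw [Finset.sum_congr rfl hterm, ← Finset.sum_mul, hw1, one_mul] at hle
  exact hle
end

section
/- Fix m > 0, n > 0, N ≥ 1, and a nonincreasing vector λ ∈ ℝ^N of positive numbers with largest entry λ_1. Let U_1,...,U_N, V_1 be independent exponential random variables with rate 1, and for a nonincreasing vector σ ∈ ℝ^N of positive numbers with largest entry σ_1 define C_S(σ) = E[ (1/2) log₂( 1 + m n W λ_1 U_1 σ_1 V_1 / ( n W σ_1 V_1 + m λ_1 U_1 + 1 ) ) ], where W = Σ_{i=1}^N λ_i U_i. Then C_S is Schur-convex in σ: if σ and σ' are nonincreasing vectors of positive numbers with σ ≻ σ', then C_S(σ) ≥ C_S(σ'). -/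
open MeasureTheory ProbabilityTheory Finset

lemma ae_nonneg_of_map_exp {Ω : Type*} [MeasurableSpace Ω] (P : Measure Ω) {X : Ω → ℝ}
    (hX : Measurable X) (h : Measure.map X P = expMeasure 1) : ∀ᵐ ω ∂P, 0 ≤ X ω := by
  rw [ae_iff]
  have hs : {ω | ¬ 0 ≤ X ω} = X ⁻¹' (Set.Iio 0) := by ext ω; simp [not_le]
  rw [hs, ← Measure.map_apply hX measurableSet_Iio, h]
  show expMeasure 1 (Set.Iio 0) = 0
  rw [expMeasure, gammaMeasure, withDensity_apply _ measurableSet_Iio]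
  exact lintegral_gammaPDF_of_nonpos le_rfl

lemma frac_le {A B : ℝ} (hA : 0 ≤ A) (hB : 0 ≤ B) : A * B / (B + A + 1) ≤ A := by
  rw [div_le_iff₀ (by positivity)]
  nlinarith

lemma frac_mono {A B₁ B₂ : ℝ} (hA : 0 ≤ A) (hB : 0 ≤ B₁) (h12 : B₁ ≤ B₂) :
    A * B₁ / (B₁ + A + 1) ≤ A * B₂ / (B₂ + A + 1) := by
  have hB2 : 0 ≤ B₂ := hB.trans h12
  rw [div_le_div_iff₀ (by positivity) (by positivity)]
  nlinarith [mul_nonneg (mul_nonneg hA (sub_nonneg.mpr h12)) (show (0:ℝ) ≤ A + 1 by linarith)]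

lemma point_mono {m n w l u v s t : ℝ} (hm : 0 ≤ m) (hn : 0 ≤ n) (hw : 0 ≤ w) (hl : 0 ≤ l)
    (hu : 0 ≤ u) (hv : 0 ≤ v) (hs : 0 ≤ s) (hst : s ≤ t) :
    (1/2 : ℝ) * Real.logb 2 (1 + m*n*w*l*u*s*v/(n*w*s*v + m*l*u + 1)) ≤
      (1/2 : ℝ) * Real.logb 2 (1 + m*n*w*l*u*t*v/(n*w*t*v + m*l*u + 1)) := by
  have ht : 0 ≤ t := hs.trans hst
  have hA : 0 ≤ m*l*u := by positivity
  have hB1 : 0 ≤ n*w*s*v := by positivity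
  have e1 : 1 + m*n*w*l*u*s*v/(n*w*s*v + m*l*u + 1)
      = 1 + (m*l*u)*(n*w*s*v)/((n*w*s*v) + (m*l*u) + 1) := by ring_nf
  have e2 : 1 + m*n*w*l*u*t*v/(n*w*t*v + m*l*u + 1)
      = 1 + (m*l*u)*(n*w*t*v)/((n*w*t*v) + (m*l*u) + 1) := by ring_nf
  rw [e1, e2]
  have hfr : 0 ≤ (m*l*u)*(n*w*s*v)/((n*w*s*v) + (m*l*u) + 1) := by positivity
  refine mul_le_mul_of_nonneg_left ?_ (by norm_num)
  refine Real.logb_le_logb_of_le one_lt_two (by linarith) ?_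
  have hB12 : n*w*s*v ≤ n*w*t*v := by
    calc n*w*s*v = (n*w*v)*s := by ring
      _ ≤ (n*w*v)*t := mul_le_mul_of_nonneg_left hst (by positivity)
      _ = n*w*t*v := by ring
  have := frac_mono hA hB1 hB12
  linarith

lemma point_bound {m n w l u v s : ℝ} (hm : 0 ≤ m) (hn : 0 ≤ n) (hw : 0 ≤ w) (hl : 0 ≤ l)
    (hu : 0 ≤ u) (hv : 0 ≤ v) (hs : 0 ≤ s) :
    0 ≤ (1/2 : ℝ) * Real.logb 2 (1 + m*n*w*l*u*s*v/(n*w*s*v + m*l*u + 1)) ∧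
      (1/2 : ℝ) * Real.logb 2 (1 + m*n*w*l*u*s*v/(n*w*s*v + m*l*u + 1)) ≤
        m * l / (2 * Real.log 2) * u := by
  have hA : 0 ≤ m*l*u := by positivity
  have hB : 0 ≤ n*w*s*v := by positivity
  have e1 : 1 + m*n*w*l*u*s*v/(n*w*s*v + m*l*u + 1)
      = 1 + (m*l*u)*(n*w*s*v)/((n*w*s*v) + (m*l*u) + 1) := by ring_nf
  rw [e1]
  set fr := (m*l*u)*(n*w*s*v)/((n*w*s*v) + (m*l*u) + 1) with hfrdef
  have hfr0 : 0 ≤ fr := by positivity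
  have hfrA : fr ≤ m*l*u := frac_le hA hB
  have hlog2 : 0 < Real.log 2 := Real.log_pos one_lt_two
  constructor
  · exact mul_nonneg (by norm_num) (Real.logb_nonneg one_lt_two (by linarith))
  · have hlog : Real.log (1 + fr) ≤ fr := by
      have := Real.log_le_sub_one_of_pos (show (0:ℝ) < 1 + fr by linarith)
      linarith
    have : Real.logb 2 (1 + fr) ≤ fr / Real.log 2 := by
      rw [Real.logb]
      exact div_le_div_of_nonneg_right hlog hlog2.le
    calc (1/2 : ℝ) * Real.logb 2 (1 + fr) ≤ (1/2) * (fr / Real.log 2) := by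
          refine mul_le_mul_of_nonneg_left this (by norm_num)
      _ ≤ (1/2) * ((m*l*u) / Real.log 2) := by
          refine mul_le_mul_of_nonneg_left ?_ (by norm_num)
          exact div_le_div_of_nonneg_right hfrA hlog2.le
      _ = m * l / (2 * Real.log 2) * u := by field_simp

/-- With `m, n > 0`, `λ` a nonincreasing positive vector with largest
entry `λ₁`, `U_1,…,U_N,V_1` independent rate-1 exponentials, `W = Σ λ_i U_i`, the
statistical-CSI ergodic capacity
`C_S(σ) = E[(1/2) log₂(1 + m n W λ₁ U₁ σ₁ V₁/(n W σ₁ V₁ + m λ₁ U₁ + 1))]` is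
Schur-convex in `σ`: if `σ, σ'` are nonincreasing positive vectors with `σ ≻ σ'`,
then `C_S(σ) ≥ C_S(σ')`. -/
theorem stmt_15 {Ω : Type*} [MeasurableSpace Ω] (P : Measure Ω) [IsProbabilityMeasure P]
    (m n : ℝ) (hm : 0 < m) (hn : 0 < n) (N : ℕ) (hN : 0 < N)
    (lam : Fin N → ℝ) (hlam : ∀ i, 0 < lam i) (hlamd : Antitone lam)
    (U : Fin N → Ω → ℝ) (V₁ : Ω → ℝ)
    (hUm : ∀ i, Measurable (U i)) (hVm : Measurable V₁)
    (hindep : iIndepFun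
      (Sum.elim U (fun _ : Unit => V₁) : Fin N ⊕ Unit → Ω → ℝ) P)
    (hU : ∀ i, Measure.map (U i) P = expMeasure 1)
    (hV : Measure.map V₁ P = expMeasure 1)
    (σ σ' : Fin N → ℝ) (hσ : ∀ i, 0 < σ i) (hσ' : ∀ i, 0 < σ' i)
    (hσd : Antitone σ) (hσ'd : Antitone σ') (hmaj : Majorizes σ σ') :
    ∫ ω, (1 / 2 : ℝ) * Real.logb 2
        (1 + m * n * (∑ i, lam i * U i ω) * lam ⟨0, hN⟩ * U ⟨0, hN⟩ ω *
            σ' ⟨0, hN⟩ * V₁ ω /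
          (n * (∑ i, lam i * U i ω) * σ' ⟨0, hN⟩ * V₁ ω +
            m * lam ⟨0, hN⟩ * U ⟨0, hN⟩ ω + 1)) ∂P ≤
      ∫ ω, (1 / 2 : ℝ) * Real.logb 2
        (1 + m * n * (∑ i, lam i * U i ω) * lam ⟨0, hN⟩ * U ⟨0, hN⟩ ω *
            σ ⟨0, hN⟩ * V₁ ω /
          (n * (∑ i, lam i * U i ω) * σ ⟨0, hN⟩ * V₁ ω +
            m * lam ⟨0, hN⟩ * U ⟨0, hN⟩ ω + 1)) ∂P := by
  classical
  set z : Fin N := ⟨0, hN⟩ with hz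
  obtain ⟨p, q, hap, hbq, hpk, hsum⟩ := hmaj
  have hσ0 : σ' z ≤ σ z := by
    rcases lt_or_ge 1 N with h1 | h1
    · have hzle : ∀ j : Fin N, z ≤ j := fun j => by simp [Fin.le_def, hz]
      have hpz : σ (p z) = σ z := le_antisymm (hσd (hzle _))
        (by simpa using hap (hzle (p.symm z)))
      have hqz : σ' (q z) = σ' z := le_antisymm (hσ'd (hzle _))
        (by simpa using hbq (hzle (q.symm z)))
      have hfil : (univ.filter (fun i : Fin N => (i : ℕ) < 1)) = {z} := by
        ext i; simp [Fin.ext_iff, Nat.lt_one_iff, hz]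
      have hk := hpk 1 h1
      rw [hfil, sum_singleton, sum_singleton] at hk
      rw [← hpz, ← hqz]; exact hk
    · have hN1 : N = 1 := le_antisymm h1 hN
      subst hN1
      simp only [Fin.sum_univ_one] at hsum
      have : z = (0 : Fin 1) := rfl
      rw [this]
      exact hsum.symm.le
  have hUae : ∀ᵐ ω ∂P, ∀ i, 0 ≤ U i ω :=
    (ae_all_iff).mpr fun i => ae_nonneg_of_map_exp P (hUm i) (hU i)
  have hVae : ∀ᵐ ω ∂P, 0 ≤ V₁ ω := ae_nonneg_of_map_exp P hVm hV
  have hWm : Measurable (fun ω => ∑ i, lam i * U i ω) :=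
    Finset.measurable_sum _ fun i _ => (hUm i).const_mul _
  have hmeas : ∀ s : ℝ, Measurable (fun ω =>
      (1 / 2 : ℝ) * Real.logb 2
        (1 + m * n * (∑ i, lam i * U i ω) * lam z * U z ω * s * V₁ ω /
          (n * (∑ i, lam i * U i ω) * s * V₁ ω + m * lam z * U z ω + 1))) := by
    intro s
    have harg : Measurable (fun ω =>
        1 + m * n * (∑ i, lam i * U i ω) * lam z * U z ω * s * V₁ ω /
          (n * (∑ i, lam i * U i ω) * s * V₁ ω + m * lam z * U z ω + 1)) := by
      apply Measurable.add measurable_const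
      apply Measurable.div
      · exact ((((((measurable_const.mul hWm).mul measurable_const).mul (hUm z)).mul
          measurable_const).mul hVm))
      · exact ((((measurable_const.mul hWm).mul measurable_const).mul hVm).add
          ((measurable_const.mul (hUm z)))).add measurable_const
    simp only [Real.logb]
    exact ((Real.measurable_log.comp harg).div_const (Real.log 2)).const_mul _
  have hUz : Integrable (U z) P := by
    have h1 : Integrable (fun x : ℝ => x) (Measure.map (U z) P) := by
      rw [hU z]; exact integrable_id_expMeasure
    have h2 := (integrable_map_measure aestronglyMeasurable_id (hUm z).aemeasurable).mp h1
    simpa [Function.comp] using h2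
  have hint : ∀ s : ℝ, 0 ≤ s → Integrable (fun ω =>
      (1 / 2 : ℝ) * Real.logb 2
        (1 + m * n * (∑ i, lam i * U i ω) * lam z * U z ω * s * V₁ ω /
          (n * (∑ i, lam i * U i ω) * s * V₁ ω + m * lam z * U z ω + 1))) P := by
    intro s hs
    refine Integrable.mono' (hUz.const_mul (m * lam z / (2 * Real.log 2)))
      ((hmeas s).aestronglyMeasurable) ?_
    filter_upwards [hUae, hVae] with ω hu hv
    have hw : 0 ≤ ∑ i, lam i * U i ω :=
      Finset.sum_nonneg fun i _ => mul_nonneg (hlam i).le (hu i)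
    have hb := point_bound (m := m) (n := n) (w := ∑ i, lam i * U i ω) (l := lam z)
      (u := U z ω) (v := V₁ ω) (s := s) hm.le hn.le hw (hlam z).le (hu z) hv hs
    rw [Real.norm_eq_abs, abs_of_nonneg hb.1]
    exact hb.2
  refine integral_mono_ae (hint (σ' z) (hσ' z).le) (hint (σ z) (hσ z).le) ?_
  filter_upwards [hUae, hVae] with ω hu hv
  have hw : 0 ≤ ∑ i, lam i * U i ω :=
    Finset.sum_nonneg fun i _ => mul_nonneg (hlam i).le (hu i)
  exact point_mono hm.le hn.le hw (hlam z).le (hu z) hv (hσ' z).le hσ0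
end
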